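/- arXiv:math/9906097 — 8 statements merged into one kernel-verified Lean document; each statement's English description precedes it below -/
import Mathlib

section
/- Let n ≥ 0, let X and A_1, …, A_n be finite sets, and for each 1 ≤ i ≤ n let f_i : X → A_i be a function. Then the number of tuples (x_0, x_1, …, x_n) ∈ X^(n+1) satisfying f_i(x_{i−1}) = f_i(x_i) for all 1 ≤ i ≤ n is at least 2^(−n) · (#X)^(n+1) / (∏_{i=1}^n #A_i), i.e. 2^n · (#{such tuples}) · ∏_{i=1}^n #A_i ≥ (#X)^(n+1). -/
/-! Let `m(y)` count the chains starting at `x₀ = y`, and `m'` the chains for `f₂, …, fₙ`, so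
that `m(y) = ∑ m'(z)` over the `f₁`-fibre of `y`, of size `c(y)`. Jensen's inequality for `log` on
that fibre gives `log m(y) ≥ log c(y) + (average of log m' over the fibre)`. Summed over `y`, the
fibre averages recombine into `∑ log m'`, and `∑_y log c(y) ≥ #X log (#X / #A₁)` (Jensen again,
since `∑_y 1 / c(y)` is the number of nonempty fibres), so by induction
`∑_y log m(y) ≥ #X ∑ᵢ log (#X / #Aᵢ)`. A last application of Jensen to `∑_y m(y)` gives
`(#X)^(n+1) ≤ #chains · ∏ᵢ #Aᵢ`. -/

open Finset Real

theorem Real.sum_log_le_card_mul_log_avg {ι : Type*} {s : Finset ι} (hs : s.Nonempty)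
    {v : ι → ℝ} (hv : ∀ i ∈ s, 0 < v i) :
    ∑ i ∈ s, log (v i) ≤ #s * log ((∑ i ∈ s, v i) / #s) := by
  have hcard : (0 : ℝ) < #s := by exact_mod_cast hs.card_pos
  have jensen := strictConcaveOn_log_Ioi.concaveOn.le_map_sum (t := s)
    (w := fun _ => (#s : ℝ)⁻¹) (p := v) (fun _ _ => by positivity)
    (by simp [hcard.ne']) hv
  simp only [smul_eq_mul, ← mul_sum] at jensen
  rw [inv_mul_eq_div, div_le_iff₀' hcard] at jensen
  rwa [inv_mul_eq_div] at jensen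

namespace ChainCount

variable {X : Type*} [Fintype X] {B : Type*} [DecidableEq B] (g : X → B)

def fiberCard (y : X) : ℕ := #{z | g z = g y}

lemma fiberCard_pos (y : X) : 0 < fiberCard g y := card_pos.2 ⟨y, by simp⟩

lemma fiberCard_eq_of_eq {y z : X} (h : g z = g y) : fiberCard g z = fiberCard g y := by
  simp only [fiberCard, h]

lemma sum_fiber_inv_fiberCard (y : X) : ∑ z with g z = g y, (fiberCard g z : ℝ)⁻¹ = 1 := by
  rw [sum_congr rfl fun z hz => by rw [fiberCard_eq_of_eq g (mem_filter.1 hz).2], sum_const,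
    nsmul_eq_mul]
  exact mul_inv_cancel₀ (by exact_mod_cast (fiberCard_pos g y).ne')

lemma sum_inv_fiberCard_mul_sum_fiber (h : X → ℝ) :
    ∑ y, (fiberCard g y : ℝ)⁻¹ * ∑ z with g z = g y, h z = ∑ z, h z := by
  simp_rw [mul_sum, sum_filter]
  rw [sum_comm]
  refine sum_congr rfl fun z _ => ?_
  conv_rhs => rw [← one_mul (h z), ← sum_fiber_inv_fiberCard g z, sum_mul, sum_filter]
  exact sum_congr rfl fun y _ => by simp only [eq_comm]

lemma sum_inv_fiberCard_le [Fintype B] : ∑ y, (fiberCard g y : ℝ)⁻¹ ≤ Fintype.card B := by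
  rw [← sum_fiberwise univ g, ← Finset.card_univ, card_eq_sum_ones, Nat.cast_sum]
  refine sum_le_sum fun b _ => ?_
  rcases eq_empty_or_nonempty {z | g z = b} with hempty | ⟨y, hy⟩
  · simp [hempty]
  · rw [← (mem_filter.1 hy).2]
    simpa using (sum_fiber_inv_fiberCard g y).le

lemma card_mul_log_le_sum_log_fiberCard [Fintype B] [Nonempty X] :
    (Fintype.card X : ℝ) * log (Fintype.card X / Fintype.card B) ≤ ∑ y, log (fiberCard g y) := by
  have hX : (0 : ℝ) < Fintype.card X := by exact_mod_cast Fintype.card_pos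
  have hc : ∀ y, (0 : ℝ) < (fiberCard g y : ℝ)⁻¹ := fun y => by
    have := fiberCard_pos g y
    positivity
  have jensen := sum_log_le_card_mul_log_avg univ_nonempty fun y (_ : y ∈ univ) => hc y
  have mono : log ((∑ y, (fiberCard g y : ℝ)⁻¹) / Fintype.card X) ≤
      log (Fintype.card B / Fintype.card X) :=
    log_le_log (div_pos (sum_pos (fun y _ => hc y) univ_nonempty) hX)
      (div_le_div_of_nonneg_right (sum_inv_fiberCard_le g) hX.le)
  rw [← inv_div, log_inv]
  simp only [log_inv, sum_neg_distrib, card_univ] at jensen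
  linarith [mul_le_mul_of_nonneg_left mono hX.le]

variable {n : ℕ} {A : Fin n → Type*} [∀ i, DecidableEq (A i)]

def chains (f : (i : Fin n) → X → A i) : Finset (Fin (n + 1) → X) :=
  {x | ∀ i : Fin n, f i (x i.castSucc) = f i (x i.succ)}

def chainsFrom [DecidableEq X] (f : (i : Fin n) → X → A i) (y : X) : ℕ :=
  #{x ∈ chains f | x 0 = y}

lemma one_le_chainsFrom [DecidableEq X] (f : (i : Fin n) → X → A i) (y : X) :
    1 ≤ chainsFrom f y :=
  card_pos.2 ⟨fun _ => y, by simp [chains]⟩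

lemma chainsFrom_succ [DecidableEq X] {A : Fin (n + 1) → Type*} [∀ i, DecidableEq (A i)]
    (f : (i : Fin (n + 1)) → X → A i) (y : X) :
    chainsFrom f y = ∑ z with f 0 z = f 0 y, chainsFrom (fun i => f i.succ) z := by
  have tail_bij : chainsFrom f y = #{v ∈ chains (fun i => f i.succ) | f 0 (v 0) = f 0 y} := by
    refine card_nbij' Fin.tail (fun v => Fin.cons y v) (fun x hx => ?_) (fun v hv => ?_)
      (fun x hx => ?_) (fun v _ => Fin.tail_cons _ _)
    · simp_all [chains, Fin.forall_fin_succ, Fin.tail, eq_comm]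
    · simp_all [chains, Fin.forall_fin_succ, eq_comm]
    · simp only [coe_filter, Set.mem_ofPred_eq] at hx
      simp only [← hx.2, Fin.cons_self_tail]
  rw [tail_bij, card_eq_sum_card_fiberwise (f := fun v => v 0) (t := {z | f 0 z = f 0 y})
    fun v hv => by simp_all]
  refine sum_congr rfl fun z hz => ?_
  simp only [chainsFrom, filter_filter]
  congr 1
  refine filter_congr fun v _ => ?_
  exact ⟨And.right, fun h => ⟨h ▸ (mem_filter.1 hz).2, h⟩⟩

lemma sum_chainsFrom [DecidableEq X] (f : (i : Fin n) → X → A i) :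
    ∑ y, chainsFrom f y = #(chains f) :=
  (card_eq_sum_card_fiberwise (f := fun x : Fin (n + 1) → X => x 0) (t := univ)
    fun _ _ => mem_univ _).symm

lemma log_fiberCard_add_avg_log_le_log_chainsFrom [DecidableEq X] {A : Fin (n + 1) → Type*}
    [∀ i, DecidableEq (A i)] (f : (i : Fin (n + 1)) → X → A i) (y : X) :
    log (fiberCard (f 0) y) + (fiberCard (f 0) y : ℝ)⁻¹ *
        ∑ z with f 0 z = f 0 y, log (chainsFrom (fun i => f i.succ) z) ≤
      log (chainsFrom f y) := by
  have hc : (0 : ℝ) < fiberCard (f 0) y := by exact_mod_cast fiberCard_pos (f 0) y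
  have jensen := sum_log_le_card_mul_log_avg (s := {z | f 0 z = f 0 y}) ⟨y, by simp⟩
    (v := fun z => (chainsFrom (fun i => f i.succ) z : ℝ))
    fun z _ => by exact_mod_cast one_le_chainsFrom _ z
  have hsum : (0 : ℝ) < chainsFrom f y := by exact_mod_cast one_le_chainsFrom f y
  rw [← Nat.cast_sum, ← chainsFrom_succ, show #{z | f 0 z = f 0 y} = fiberCard (f 0) y from rfl,
    log_div hsum.ne' hc.ne'] at jensen
  rw [← le_sub_iff_add_le', inv_mul_le_iff₀ hc]
  exact jensen

theorem sum_card_mul_log_le_sum_log_chainsFrom [DecidableEq X] [Nonempty X] :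
    ∀ {n : ℕ} {A : Fin n → Type*} [∀ i, Fintype (A i)] [∀ i, DecidableEq (A i)]
      (f : (i : Fin n) → X → A i),
      ∑ i, (Fintype.card X : ℝ) * log (Fintype.card X / Fintype.card (A i)) ≤
        ∑ y, log (chainsFrom f y)
  | 0, _, _, _, f => by
    simpa using sum_nonneg fun y _ => log_nonneg (by exact_mod_cast one_le_chainsFrom f y)
  | n + 1, A, _, _, f => by
    rw [Fin.sum_univ_succ]
    calc _ ≤ ∑ y, log (fiberCard (f 0) y) + ∑ z, log (chainsFrom (fun i => f i.succ) z) :=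
          add_le_add (card_mul_log_le_sum_log_fiberCard (f 0))
            (sum_card_mul_log_le_sum_log_chainsFrom fun i => f i.succ)
      _ = ∑ y, (log (fiberCard (f 0) y) + (fiberCard (f 0) y : ℝ)⁻¹ *
            ∑ z with f 0 z = f 0 y, log (chainsFrom (fun i => f i.succ) z)) := by
          rw [sum_add_distrib, sum_inv_fiberCard_mul_sum_fiber]
      _ ≤ _ := sum_le_sum fun y _ => log_fiberCard_add_avg_log_le_log_chainsFrom f y

theorem card_pow_le_card_chains_mul_prod [∀ i, Fintype (A i)] (f : (i : Fin n) → X → A i) :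
    Fintype.card X ^ (n + 1) ≤ #(chains f) * ∏ i, Fintype.card (A i) := by
  classical
  cases isEmpty_or_nonempty X
  · simp
  have hX : (0 : ℝ) < Fintype.card X := by exact_mod_cast Fintype.card_pos
  have hA : ∀ i, (0 : ℝ) < Fintype.card (A i) := fun i => by
    have : Nonempty (A i) := ⟨f i (Classical.arbitrary X)⟩
    exact_mod_cast Fintype.card_pos
  have hN : (0 : ℝ) < #(chains f) := by
    rw [← sum_chainsFrom]
    exact_mod_cast sum_pos (fun y _ => one_le_chainsFrom f y) univ_nonempty
  have jensen := sum_log_le_card_mul_log_avg univ_nonempty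
    fun y (_ : y ∈ univ) => (by exact_mod_cast one_le_chainsFrom f y : (0 : ℝ) < chainsFrom f y)
  rw [← Nat.cast_sum, sum_chainsFrom, card_univ] at jensen
  have hlog : ∑ i, log (Fintype.card X / Fintype.card (A i)) ≤
      log (#(chains f) / Fintype.card X) := by
    refine le_of_mul_le_mul_left ?_ hX
    rw [mul_sum]
    exact (sum_card_mul_log_le_sum_log_chainsFrom f).trans jensen
  rw [← log_prod fun i _ => (div_pos hX (hA i)).ne',
    log_le_log_iff (prod_pos fun i _ => div_pos hX (hA i)) (div_pos hN hX), prod_div_distrib,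
    prod_const, card_univ, Fintype.card_fin, div_le_div_iff₀ (prod_pos fun i _ => hA i) hX] at hlog
  rw [pow_succ]
  exact_mod_cast hlog

end ChainCount

theorem chain_count_lower_bound_weak_general (n : ℕ) (X : Type*) [Fintype X]
    (A : Fin n → Type*) [∀ i, Fintype (A i)] [∀ i, DecidableEq (A i)]
    (f : (i : Fin n) → X → A i) :
    Fintype.card X ^ (n + 1) ≤
      2 ^ n *
      (Fintype.card {x : Fin (n + 1) → X //
        ∀ i : Fin n, f i (x i.castSucc) = f i (x i.succ)} *
      ∏ i : Fin n, Fintype.card (A i)) := by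
  rw [Fintype.card_subtype]
  exact (ChainCount.card_pow_le_card_chains_mul_prod f).trans
    (Nat.le_mul_of_pos_left _ (by positivity))

/-- **Katz–Tao, inequality (7) in the proof of the combinatorial lemma.**  Let `X` and
`A₁, …, Aₙ` be finite sets (`n ≥ 0`), and for each `i` let `fᵢ : X → Aᵢ` be a function.
Then the number of tuples `(x₀, …, xₙ) ∈ X^(n+1)` with `fᵢ(x_{i-1}) = fᵢ(xᵢ)` for all
`i` is at least `2^(-n) (#X)^(n+1) / ∏ᵢ #Aᵢ`, i.e.
`2^n · (count) · ∏ᵢ #Aᵢ ≥ (#X)^(n+1)`. -/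
theorem chain_count_lower_bound_weak (n : ℕ) (X : Type*) [Fintype X] [DecidableEq X]
    (A : Fin n → Type*) [∀ i, Fintype (A i)] [∀ i, DecidableEq (A i)]
    (f : (i : Fin n) → X → A i) :
    Fintype.card X ^ (n + 1) ≤
      2 ^ n *
      (Fintype.card {x : Fin (n + 1) → X //
        ∀ i : Fin n, f i (x i.castSucc) = f i (x i.succ)} *
      ∏ i : Fin n, Fintype.card (A i)) :=
  chain_count_lower_bound_weak_general n X A f
end

section
/- Let Z be an abelian group, let A, B be finite subsets of Z, and let G ⊆ A × B such that the map (a,b) ↦ a − b is injective on G. Define V = {(a,b,b') : (a,b), (a,b') ∈ G} and let S be the set of quadruples (v_0, v_1, v_2, v_3) ∈ V^4, with v_i = (a_i, b_i, b'_i), satisfying a_0 + b_0 = a_1 + b_1, a_0 + b'_0 = a_1 + b'_1, b_1 = b_2, b'_1 = b'_2, a_2 + b_2 = a_3 + b_3, and b'_2 = b'_3. Then the map g : S → V × A × B defined by g(v_0, v_1, v_2, v_3) = (v_0, a_2, b_3) is injective. -/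
/-- **Katz–Tao, injectivity of the map `g` in the proof of the `N^(11/6)` bound.**
Let `Z` be an abelian group, `A, B` finite subsets of `Z`, and `G ⊆ A × B` such that
`(a,b) ↦ a - b` is injective on `G`.  Let `V = {(a,b,b') : (a,b), (a,b') ∈ G}` and let
`S` be the set of quadruples `(v₀,v₁,v₂,v₃) ∈ V⁴`, `vᵢ = (aᵢ,bᵢ,b'ᵢ)`, with
`a₀+b₀ = a₁+b₁`, `a₀+b'₀ = a₁+b'₁`, `b₁ = b₂`, `b'₁ = b'₂`, `a₂+b₂ = a₃+b₃`,
`b'₂ = b'₃`.  Then `g(v₀,v₁,v₂,v₃) = (v₀, a₂, b₃)` is injective on `S`. -/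
theorem g_injective_on_S {Z : Type*} [AddCommGroup Z]
    (A B : Finset Z) (G : Finset (Z × Z)) (hG : G ⊆ A ×ˢ B)
    (hinj : ∀ p ∈ G, ∀ q ∈ G, p.1 - p.2 = q.1 - q.2 → p = q)
    (V : Set (Z × Z × Z))
    (hV : V = {v | (v.1, v.2.1) ∈ G ∧ (v.1, v.2.2) ∈ G})
    (S : Set ((Z × Z × Z) × (Z × Z × Z) × (Z × Z × Z) × (Z × Z × Z)))
    (hS : S = {q | q.1 ∈ V ∧ q.2.1 ∈ V ∧ q.2.2.1 ∈ V ∧ q.2.2.2 ∈ V ∧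
      q.1.1 + q.1.2.1 = q.2.1.1 + q.2.1.2.1 ∧
      q.1.1 + q.1.2.2 = q.2.1.1 + q.2.1.2.2 ∧
      q.2.1.2.1 = q.2.2.1.2.1 ∧
      q.2.1.2.2 = q.2.2.1.2.2 ∧
      q.2.2.1.1 + q.2.2.1.2.1 = q.2.2.2.1 + q.2.2.2.2.1 ∧
      q.2.2.1.2.2 = q.2.2.2.2.2}) :
    Set.InjOn (fun q : (Z × Z × Z) × (Z × Z × Z) × (Z × Z × Z) × (Z × Z × Z) =>
      (q.1, q.2.2.1.1, q.2.2.2.2.1)) S := by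
  subst hV hS
  rintro ⟨⟨a0, b0, b0'⟩, ⟨a1, b1, b1'⟩, ⟨a2, b2, b2'⟩, ⟨a3, b3, b3'⟩⟩ hx
    ⟨⟨c0, d0, d0'⟩, ⟨c1, d1, d1'⟩, ⟨c2, d2, d2'⟩, ⟨c3, d3, d3'⟩⟩ hy hxy
  simp only [Set.mem_setOf_eq] at hx hy
  obtain ⟨⟨hx01, hx02⟩, ⟨hx11, hx12⟩, ⟨hx21, hx22⟩, ⟨hx31, hx32⟩, e1, e2, e3, e4, e5, e6⟩ := hx
  obtain ⟨⟨hy01, hy02⟩, ⟨hy11, hy12⟩, ⟨hy21, hy22⟩, ⟨hy31, hy32⟩, f1, f2, f3, f4, f5, f6⟩ := hy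
  simp only [Prod.mk.injEq] at hxy ⊢
  obtain ⟨⟨ha0, hb0, hb0'⟩, ha2, hb3⟩ := hxy
  subst ha0 hb0 hb0' ha2 hb3
  subst e3 e4 e6 f3 f4 f6
  -- key cancellations: b1 - b1' = b0 - b0' = d1 - d1'
  have k1 : b1 - b1' = b0 - b0' := by
    calc b1 - b1' = (a1 + b1) - (a1 + b1') := by abel
    _ = (a0 + b0) - (a0 + b0') := by rw [← e1, ← e2]
    _ = b0 - b0' := by abel
  have k2 : d1 - d1' = b0 - b0' := by
    calc d1 - d1' = (c1 + d1) - (c1 + d1') := by abel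
    _ = (a0 + b0) - (a0 + b0') := by rw [← f1, ← f2]
    _ = b0 - b0' := by abel
  have hdiff : a3 - b1' = c3 - d1' := by
    calc a3 - b1' = (a3 + b3) - b3 - b1' := by abel
    _ = (a2 + b1) - b3 - b1' := by rw [← e5]
    _ = a2 - b3 + (b1 - b1') := by abel
    _ = a2 - b3 + (d1 - d1') := by rw [k1, ← k2]
    _ = (a2 + d1) - b3 - d1' := by abel
    _ = (c3 + b3) - b3 - d1' := by rw [f5]
    _ = c3 - d1' := by abel
  have h33 := hinj (a3, b1') hx32 (c3, d1') hy32 hdiff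
  simp only [Prod.mk.injEq] at h33
  obtain ⟨ha3, hb1'⟩ := h33
  subst ha3 hb1'
  have hb1 : b1 = d1 := by
    have : a2 + b1 = a2 + d1 := e5.trans f5.symm
    exact add_left_cancel this
  subst hb1
  have ha1 : a1 = c1 := by
    have : a1 + b1' = c1 + b1' := e2.symm.trans f2
    exact add_right_cancel this
  subst ha1
  simp
end

section
/- Let Z be an abelian group, let A, B be finite subsets of Z, and let G ⊆ A × B such that the map (a,b) ↦ a − b is injective on G. Define V = {(a,b,b') : (a,b), (a,b') ∈ G} and let S be the set of quadruples (v_0, v_1, v_2, v_3) ∈ V^4, with v_i = (a_i, b_i, b'_i), satisfying a_0 + b_0 = a_1 + b_1, a_0 + b'_0 = a_1 + b'_1, b_1 = b_2, b'_1 = b'_2, a_2 + b_2 = a_3 + b_3, and b'_2 = b'_3. Then #S ≤ #V · #A · #B. -/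
/-!
The quadruple is recovered from `(v₀, a₂, b₃)`: the linking equations give
`a₃ - b'₃ = a₂ - b₃ + (b₀ - b'₀)`, and `(a₃, b'₃) ∈ G` is then pinned down by the injectivity of
`(a, b) ↦ a - b` on `G`; after that `b₂ = a₃ + b₃ - a₂`, `b'₂ = b'₃`, `v₁` shares `b₂, b'₂` with
`v₂`, and `a₁ = a₀ + b₀ - b₁`. Hence `S` injects into `V × A × B`.
-/

section LinkedQuadruple

variable {Z : Type*} [AddCommGroup Z]

/-- The six equations defining `S`, with `q = (v₀, v₁, v₂, v₃)` and `vᵢ = (aᵢ, bᵢ, b'ᵢ)`. -/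
def IsLinked (q : (Z × Z × Z) × (Z × Z × Z) × (Z × Z × Z) × (Z × Z × Z)) : Prop :=
  q.1.1 + q.1.2.1 = q.2.1.1 + q.2.1.2.1 ∧
  q.1.1 + q.1.2.2 = q.2.1.1 + q.2.1.2.2 ∧
  q.2.1.2.1 = q.2.2.1.2.1 ∧
  q.2.1.2.2 = q.2.2.1.2.2 ∧
  q.2.2.1.1 + q.2.2.1.2.1 = q.2.2.2.1 + q.2.2.2.2.1 ∧
  q.2.2.1.2.2 = q.2.2.2.2.2

def linkedOfEnds (v₀ : Z × Z × Z) (a₂ b₃ a₃ b₃' : Z) :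
    (Z × Z × Z) × (Z × Z × Z) × (Z × Z × Z) × (Z × Z × Z) :=
  let b₂ := a₃ + b₃ - a₂
  (v₀, (v₀.1 + v₀.2.1 - b₂, b₂, b₃'), (a₂, b₂, b₃'), (a₃, b₃, b₃'))

namespace IsLinked

variable {q : (Z × Z × Z) × (Z × Z × Z) × (Z × Z × Z) × (Z × Z × Z)}

theorem sub_eq (h : IsLinked q) :
    q.2.2.2.1 - q.2.2.2.2.2 = q.2.2.1.1 - q.2.2.2.2.1 + (q.1.2.1 - q.1.2.2) := by
  obtain ⟨⟨a₀, b₀, b₀'⟩, ⟨a₁, b₁, b₁'⟩, ⟨a₂, b₂, b₂'⟩, ⟨a₃, b₃, b₃'⟩⟩ := q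
  dsimp only [IsLinked] at h ⊢
  obtain ⟨e₁, e₂, rfl, rfl, e₅, rfl⟩ := h
  have hb : b₀ - b₀' = b₁ - b₁' := by
    rw [← add_sub_add_left_eq_sub b₀ b₀' a₀, e₁, e₂, add_sub_add_left_eq_sub]
  rw [hb, eq_sub_of_add_eq' e₅.symm]
  abel

theorem eq_linkedOfEnds (h : IsLinked q) :
    q = linkedOfEnds q.1 q.2.2.1.1 q.2.2.2.2.1 q.2.2.2.1 q.2.2.2.2.2 := by
  obtain ⟨⟨a₀, b₀, b₀'⟩, ⟨a₁, b₁, b₁'⟩, ⟨a₂, b₂, b₂'⟩, ⟨a₃, b₃, b₃'⟩⟩ := q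
  dsimp only [IsLinked] at h ⊢
  obtain ⟨e₁, -, rfl, rfl, e₅, rfl⟩ := h
  simp only [linkedOfEnds, ← e₅, add_sub_cancel_left, e₁, add_sub_cancel_right]

end IsLinked

theorem injOn_of_isLinked {G : Set (Z × Z)} (hG : G.InjOn fun p => p.1 - p.2)
    {T : Set ((Z × Z × Z) × (Z × Z × Z) × (Z × Z × Z) × (Z × Z × Z))}
    (hT : ∀ q ∈ T, IsLinked q ∧ (q.2.2.2.1, q.2.2.2.2.2) ∈ G) :
    T.InjOn fun q => (q.1, q.2.2.1.1, q.2.2.2.2.1) := by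
  intro q hq q' hq' hqq'
  obtain ⟨hv₀, ha₂, hb₃⟩ : q.1 = q'.1 ∧ q.2.2.1.1 = q'.2.2.1.1 ∧ q.2.2.2.2.1 = q'.2.2.2.2.1 := by
    simpa only [Prod.mk.injEq] using hqq'
  obtain ⟨hlink, hG₃⟩ := hT q hq
  obtain ⟨hlink', hG₃'⟩ := hT q' hq'
  have hend : (q.2.2.2.1, q.2.2.2.2.2) = (q'.2.2.2.1, q'.2.2.2.2.2) :=
    hG hG₃ hG₃' (by simp only [hlink.sub_eq, hlink'.sub_eq, hv₀, ha₂, hb₃])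
  simp only [Prod.mk.injEq] at hend
  rw [hlink.eq_linkedOfEnds, hlink'.eq_linkedOfEnds, hv₀, ha₂, hb₃, hend.1, hend.2]

end LinkedQuadruple

theorem S_card_upper_bound_general {Z : Type*} [AddCommGroup Z] [DecidableEq Z]
    (A B : Finset Z) (G : Finset (Z × Z))
    (hinj : ∀ p ∈ G, ∀ q ∈ G, p.1 - p.2 = q.1 - q.2 → p = q)
    (V : Finset (Z × Z × Z))
    (hV : V = (A ×ˢ B ×ˢ B).filter (fun v => (v.1, v.2.1) ∈ G ∧ (v.1, v.2.2) ∈ G))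
    (S : Finset ((Z × Z × Z) × (Z × Z × Z) × (Z × Z × Z) × (Z × Z × Z)))
    (hS : S = (V ×ˢ V ×ˢ V ×ˢ V).filter (fun q =>
      q.1.1 + q.1.2.1 = q.2.1.1 + q.2.1.2.1 ∧
      q.1.1 + q.1.2.2 = q.2.1.1 + q.2.1.2.2 ∧
      q.2.1.2.1 = q.2.2.1.2.1 ∧
      q.2.1.2.2 = q.2.2.1.2.2 ∧
      q.2.2.1.1 + q.2.2.1.2.1 = q.2.2.2.1 + q.2.2.2.2.1 ∧
      q.2.2.1.2.2 = q.2.2.2.2.2)) :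
    S.card ≤ V.card * A.card * B.card := by
  have mem_V : ∀ v ∈ V, v.1 ∈ A ∧ v.2.1 ∈ B ∧ (v.1, v.2.2) ∈ G := by
    intro v hv
    simp only [hV, Finset.mem_filter, Finset.mem_product] at hv
    exact ⟨hv.1.1, hv.1.2.1, hv.2.2⟩
  have mem_S : ∀ q ∈ S, (q.1 ∈ V ∧ q.2.2.1 ∈ V ∧ q.2.2.2 ∈ V) ∧ IsLinked q := by
    intro q hq
    simp only [hS, Finset.mem_filter, Finset.mem_product] at hq
    exact ⟨⟨hq.1.1, hq.1.2.2.1, hq.1.2.2.2⟩, hq.2⟩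
  have maps : ∀ q ∈ S, (q.1, q.2.2.1.1, q.2.2.2.2.1) ∈ V ×ˢ A ×ˢ B := fun q hq => by
    obtain ⟨⟨hv₀, hv₂, hv₃⟩, -⟩ := mem_S q hq
    simp only [Finset.mem_product]
    exact ⟨hv₀, (mem_V _ hv₂).1, (mem_V _ hv₃).2.1⟩
  have inj : (S : Set ((Z × Z × Z) × (Z × Z × Z) × (Z × Z × Z) × (Z × Z × Z))).InjOn
      fun q => (q.1, q.2.2.1.1, q.2.2.2.2.1) :=
    injOn_of_isLinked (G := G) (fun p hp q hq => hinj p hp q hq)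
      fun q hq => ⟨(mem_S q hq).2, (mem_V _ (mem_S q hq).1.2.2).2.2⟩
  calc S.card ≤ (V ×ˢ A ×ˢ B).card := Finset.card_le_card_of_injOn _ maps inj
    _ = V.card * A.card * B.card := by rw [Finset.card_product, Finset.card_product, mul_assoc]

/-- **Katz–Tao, the bound `#S ≤ N² #V` (with `N²` replaced by `#A · #B`).**
Let `Z` be an abelian group, `A, B` finite subsets of `Z`, and `G ⊆ A × B` such that
`(a,b) ↦ a - b` is injective on `G`.  Let `V = {(a,b,b') : (a,b), (a,b') ∈ G}` and `S`
the set of quadruples `(v₀,v₁,v₂,v₃) ∈ V⁴`, `vᵢ = (aᵢ,bᵢ,b'ᵢ)`, with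
`a₀+b₀ = a₁+b₁`, `a₀+b'₀ = a₁+b'₁`, `b₁ = b₂`, `b'₁ = b'₂`, `a₂+b₂ = a₃+b₃`,
`b'₂ = b'₃`.  Then `#S ≤ #V · #A · #B`. -/
theorem S_card_upper_bound {Z : Type*} [AddCommGroup Z] [DecidableEq Z]
    (A B : Finset Z) (G : Finset (Z × Z)) (hG : G ⊆ A ×ˢ B)
    (hinj : ∀ p ∈ G, ∀ q ∈ G, p.1 - p.2 = q.1 - q.2 → p = q)
    (V : Finset (Z × Z × Z))
    (hV : V = (A ×ˢ B ×ˢ B).filter (fun v => (v.1, v.2.1) ∈ G ∧ (v.1, v.2.2) ∈ G))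
    (S : Finset ((Z × Z × Z) × (Z × Z × Z) × (Z × Z × Z) × (Z × Z × Z)))
    (hS : S = (V ×ˢ V ×ˢ V ×ˢ V).filter (fun q =>
      q.1.1 + q.1.2.1 = q.2.1.1 + q.2.1.2.1 ∧
      q.1.1 + q.1.2.2 = q.2.1.1 + q.2.1.2.2 ∧
      q.2.1.2.1 = q.2.2.1.2.1 ∧
      q.2.1.2.2 = q.2.2.1.2.2 ∧
      q.2.2.1.1 + q.2.2.1.2.1 = q.2.2.2.1 + q.2.2.2.2.1 ∧
      q.2.2.1.2.2 = q.2.2.2.2.2)) :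
    S.card ≤ V.card * A.card * B.card :=
  S_card_upper_bound_general A B G hinj V hV S hS
end

section
/- Let Z be an abelian group, let N be a positive integer, let A, B be finite subsets of Z with #A ≤ N and #B ≤ N, and let G ⊆ A × B with #C ≤ N where C = {a + b : (a,b) ∈ G}. Define V = {(a,b,b') : (a,b), (a,b') ∈ G} and let S be the set of quadruples (v_0, v_1, v_2, v_3) ∈ V^4, with v_i = (a_i, b_i, b'_i), satisfying a_0 + b_0 = a_1 + b_1, a_0 + b'_0 = a_1 + b'_1, b_1 = b_2, b'_1 = b'_2, a_2 + b_2 = a_3 + b_3, and b'_2 = b'_3. Then #S · N^6 ≥ (#V)^4. -/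
/-!
Group the elements of `V` by the projection `p v = (b, b')`, and let `x v`, `y v` be the sizes of
the fibres through `v` of `f v = (a + b, a + b')` and `h v = (a + b, b')`. Counting the chains
`v₀ ~f v₁ ~p v₂ ~h v₃` gives `#S = ∑_β X_β Y_β`, where `X_β`, `Y_β` sum `x`, `y` over the `p`-fibre
`β`, while `∑ 1/x = #f(V)` and `∑ 1/y = #h(V)`. Three applications of Cauchy–Schwarz, with the
weight `u = √(x y)`, give `#V² ≤ (∑ u)(∑ u⁻¹)`, `(∑ u)² ≤ #p(V) ∑_β X_β Y_β` and
`(∑ u⁻¹)² ≤ (∑ 1/x)(∑ 1/y)`, hence `#V⁴ ≤ #S · #f(V) · #p(V) · #h(V)`, and each image has at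
most `N²` elements since it lies in `C × C`, `B × B` or `C × B`.
-/

open Finset

lemma sq_sum_le_card_image_mul_sum_fiber_mul_sum_fiber {ι κ R : Type*} [DecidableEq κ]
    [CommSemiring R] [LinearOrder R] [IsStrictOrderedRing R] [ExistsAddOfLE R]
    (s : Finset ι) (p : ι → κ) {r f g : ι → R} (hf : ∀ i ∈ s, 0 ≤ f i) (hg : ∀ i ∈ s, 0 ≤ g i)
    (hr : ∀ i ∈ s, r i ^ 2 ≤ f i * g i) :
    (∑ i ∈ s, r i) ^ 2 ≤
      #(s.image p) * ∑ c ∈ s.image p, (∑ i ∈ s with p i = c, f i) * ∑ i ∈ s with p i = c, g i := by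
  rw [← sum_fiberwise_of_maps_to fun i hi => mem_image_of_mem p hi]
  refine sq_sum_le_card_mul_sum_sq.trans ?_
  gcongr with c
  exact sum_sq_le_sum_mul_sum_of_sq_le_mul _ (fun i hi => hf i (mem_filter.mp hi).1)
    (fun i hi => hg i (mem_filter.mp hi).1) fun i hi => hr i (mem_filter.mp hi).1

section Fibres

variable {α β γ δ : Type*} [DecidableEq β] [DecidableEq γ] [DecidableEq δ]

def fiberChains (s : Finset α) (f : α → β) (p : α → γ) (h : α → δ) : Finset (α × α × α × α) :=
  {q ∈ s ×ˢ s ×ˢ s ×ˢ s | f q.1 = f q.2.1 ∧ p q.2.1 = p q.2.2.1 ∧ h q.2.2.1 = h q.2.2.2}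

lemma card_fiberChains (s : Finset α) (f : α → β) (p : α → γ) (h : α → δ) :
    #(fiberChains s f p h) = ∑ c ∈ s.image p,
      (∑ i ∈ s with p i = c, #{j ∈ s | f j = f i}) *
        ∑ i ∈ s with p i = c, #{j ∈ s | h j = h i} := by
  have card_eq_sum_middle : #(fiberChains s f p h) =
      ∑ i ∈ s, #{j ∈ s | f j = f i} * ∑ k ∈ s with p k = p i, #{j ∈ s | h j = h k} := by
    simp only [fiberChains, card_filter, sum_product, sum_filter, ite_and, sum_ite_irrel,
      sum_const_zero, sum_mul, boole_mul]
    rw [sum_comm]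
    simp only [eq_comm]
  rw [card_eq_sum_middle, ← sum_fiberwise_of_maps_to fun i hi => mem_image_of_mem p hi]
  refine sum_congr rfl fun c _ => ?_
  rw [sum_mul]
  refine sum_congr rfl fun i hi => ?_
  rw [(mem_filter.mp hi).2]

lemma sum_inv_card_fiber {K : Type*} [Semifield K] [CharZero K] (s : Finset α) (f : α → β) :
    ∑ i ∈ s, (#{j ∈ s | f j = f i} : K)⁻¹ = #(s.image f) := by
  rw [← sum_fiberwise_of_maps_to fun i hi => mem_image_of_mem f hi, card_eq_sum_ones,
    Nat.cast_sum]
  refine sum_congr rfl fun c hc => ?_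
  obtain ⟨i, hi, rfl⟩ := mem_image.mp hc
  have hpos : 0 < #{j ∈ s | f j = f i} := card_pos.mpr ⟨i, mem_filter.mpr ⟨hi, rfl⟩⟩
  rw [sum_congr rfl fun j hj => by rw [(mem_filter.mp hj).2], sum_const, nsmul_eq_mul,
    mul_inv_cancel₀ (Nat.cast_ne_zero.mpr hpos.ne'), Nat.cast_one]

theorem card_pow_four_le_card_fiberChains_mul (s : Finset α) (f : α → β) (p : α → γ) (h : α → δ) :
    #s ^ 4 ≤ #(fiberChains s f p h) * (#(s.image f) * #(s.image p) * #(s.image h)) := by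
  set x : α → ℝ := fun i => #{j ∈ s | f j = f i}
  set y : α → ℝ := fun i => #{j ∈ s | h j = h i}
  have hx : ∀ i ∈ s, 0 < x i := fun i hi =>
    Nat.cast_pos.mpr (card_pos.mpr ⟨i, mem_filter.mpr ⟨hi, rfl⟩⟩)
  have hy : ∀ i ∈ s, 0 < y i := fun i hi =>
    Nat.cast_pos.mpr (card_pos.mpr ⟨i, mem_filter.mpr ⟨hi, rfl⟩⟩)
  set u : α → ℝ := fun i => √(x i * y i)
  have hu_sq : ∀ i ∈ s, u i ^ 2 = x i * y i := fun i hi =>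
    Real.sq_sqrt (mul_pos (hx i hi) (hy i hi)).le
  have hu : ∀ i ∈ s, 0 < u i := fun i hi => Real.sqrt_pos.mpr (mul_pos (hx i hi) (hy i hi))
  have card_sq : (#s : ℝ) ^ 2 ≤ (∑ i ∈ s, u i) * ∑ i ∈ s, (u i)⁻¹ := by
    have := sum_sq_le_sum_mul_sum_of_sq_le_mul s (r := fun _ => 1) (fun i hi => (hu i hi).le)
      (fun i hi => (inv_pos.mpr (hu i hi)).le) fun i hi => by
        rw [one_pow, mul_inv_cancel₀ (hu i hi).ne']
    rwa [sum_const, nsmul_one] at this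
  have sum_sq : (∑ i ∈ s, u i) ^ 2 ≤ #(s.image p) * #(fiberChains s f p h) := by
    rw [card_fiberChains]
    push_cast
    exact sq_sum_le_card_image_mul_sum_fiber_mul_sum_fiber s p (fun i hi => (hx i hi).le)
      (fun i hi => (hy i hi).le) fun i hi => (hu_sq i hi).le
  have sum_inv_sq : (∑ i ∈ s, (u i)⁻¹) ^ 2 ≤ #(s.image f) * #(s.image h) := by
    rw [← sum_inv_card_fiber s f, ← sum_inv_card_fiber s h]
    refine sum_sq_le_sum_mul_sum_of_sq_le_mul s (fun i hi => (inv_pos.mpr (hx i hi)).le)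
      (fun i hi => (inv_pos.mpr (hy i hi)).le) fun i hi => ?_
    rw [inv_pow, hu_sq i hi, mul_inv]
  have : (#s : ℝ) ^ 4 ≤ #(fiberChains s f p h) * (#(s.image f) * #(s.image p) * #(s.image h)) :=
    calc (#s : ℝ) ^ 4 = ((#s : ℝ) ^ 2) ^ 2 := by ring
      _ ≤ (∑ i ∈ s, u i) ^ 2 * (∑ i ∈ s, (u i)⁻¹) ^ 2 := by
        rw [← mul_pow]; gcongr
      _ ≤ (#(s.image p) * #(fiberChains s f p h)) * (#(s.image f) * #(s.image h)) :=
        mul_le_mul sum_sq sum_inv_sq (sq_nonneg _) (by positivity)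
      _ = _ := by ring
  exact_mod_cast this

end Fibres

theorem S_card_lower_bound_general {Z : Type*} [AddCommGroup Z] [DecidableEq Z]
    (N : ℕ) (A B : Finset Z) (hB : B.card ≤ N)
    (G : Finset (Z × Z))
    (hC : (G.image (fun p => p.1 + p.2)).card ≤ N)
    (V : Finset (Z × Z × Z))
    (hV : V = (A ×ˢ B ×ˢ B).filter (fun v => (v.1, v.2.1) ∈ G ∧ (v.1, v.2.2) ∈ G))
    (S : Finset ((Z × Z × Z) × (Z × Z × Z) × (Z × Z × Z) × (Z × Z × Z)))
    (hS : S = (V ×ˢ V ×ˢ V ×ˢ V).filter (fun q =>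
      q.1.1 + q.1.2.1 = q.2.1.1 + q.2.1.2.1 ∧
      q.1.1 + q.1.2.2 = q.2.1.1 + q.2.1.2.2 ∧
      q.2.1.2.1 = q.2.2.1.2.1 ∧
      q.2.1.2.2 = q.2.2.1.2.2 ∧
      q.2.2.1.1 + q.2.2.1.2.1 = q.2.2.2.1 + q.2.2.2.2.1 ∧
      q.2.2.1.2.2 = q.2.2.2.2.2)) :
    V.card ^ 4 ≤ S.card * N ^ 6 := by
  set C := G.image fun p => p.1 + p.2
  set f : Z × Z × Z → Z × Z := fun v => (v.1 + v.2.1, v.1 + v.2.2)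
  set h : Z × Z × Z → Z × Z := fun v => (v.1 + v.2.1, v.2.2)
  have hS_chains : S = fiberChains V f Prod.snd h := by
    simp only [hS, fiberChains, f, h, Prod.ext_iff, and_assoc]
  have hmem : ∀ v ∈ V, (v.1 + v.2.1 ∈ C ∧ v.1 + v.2.2 ∈ C) ∧ v.2.1 ∈ B ∧ v.2.2 ∈ B := by
    intro v hv
    simp only [hV, mem_filter, mem_product] at hv
    exact ⟨⟨mem_image_of_mem _ hv.2.1, mem_image_of_mem _ hv.2.2⟩, hv.1.2⟩
  have card_image_le {g : Z × Z × Z → Z × Z} {X Y : Finset Z} (hX : #X ≤ N) (hY : #Y ≤ N)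
      (hg : ∀ v ∈ V, g v ∈ X ×ˢ Y) : #(V.image g) ≤ N ^ 2 :=
    calc #(V.image g) ≤ #(X ×ˢ Y) := card_le_card (image_subset_iff.mpr hg)
      _ ≤ N ^ 2 := by rw [card_product, sq]; exact Nat.mul_le_mul hX hY
  have hf := card_image_le (g := f) hC hC fun v hv => mem_product.mpr (hmem v hv).1
  have hp := card_image_le (g := Prod.snd) hB hB fun v hv => mem_product.mpr (hmem v hv).2
  have hh := card_image_le (g := h) hC hB fun v hv => mem_product.mpr ⟨(hmem v hv).1.1, (hmem v hv).2.2⟩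
  calc V.card ^ 4 ≤ S.card * (N ^ 2 * N ^ 2 * N ^ 2) := by
        rw [hS_chains]
        refine (card_pow_four_le_card_fiberChains_mul V f Prod.snd h).trans ?_
        gcongr
    _ = S.card * N ^ 6 := by ring

/-- **Katz–Tao, inequality (14): `#S ≥ (#V)⁴ / N⁶`.**  Let `Z` be an abelian group,
`N` a positive integer, `A, B` finite subsets of `Z` with `#A ≤ N`, `#B ≤ N`, and
`G ⊆ A × B` with `#C ≤ N` where `C = {a + b : (a,b) ∈ G}`.  Let
`V = {(a,b,b') : (a,b), (a,b') ∈ G}` and `S` the set of quadruples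
`(v₀,v₁,v₂,v₃) ∈ V⁴`, `vᵢ = (aᵢ,bᵢ,b'ᵢ)`, with `a₀+b₀ = a₁+b₁`, `a₀+b'₀ = a₁+b'₁`,
`b₁ = b₂`, `b'₁ = b'₂`, `a₂+b₂ = a₃+b₃`, `b'₂ = b'₃`.  Then `#S · N⁶ ≥ (#V)⁴`. -/
theorem S_card_lower_bound {Z : Type*} [AddCommGroup Z] [DecidableEq Z]
    (N : ℕ) (hN : 0 < N) (A B : Finset Z) (hA : A.card ≤ N) (hB : B.card ≤ N)
    (G : Finset (Z × Z)) (hG : G ⊆ A ×ˢ B)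
    (hC : (G.image (fun p => p.1 + p.2)).card ≤ N)
    (V : Finset (Z × Z × Z))
    (hV : V = (A ×ˢ B ×ˢ B).filter (fun v => (v.1, v.2.1) ∈ G ∧ (v.1, v.2.2) ∈ G))
    (S : Finset ((Z × Z × Z) × (Z × Z × Z) × (Z × Z × Z) × (Z × Z × Z)))
    (hS : S = (V ×ˢ V ×ˢ V ×ˢ V).filter (fun q =>
      q.1.1 + q.1.2.1 = q.2.1.1 + q.2.1.2.1 ∧
      q.1.1 + q.1.2.2 = q.2.1.1 + q.2.1.2.2 ∧
      q.2.1.2.1 = q.2.2.1.2.1 ∧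
      q.2.1.2.2 = q.2.2.1.2.2 ∧
      q.2.2.1.1 + q.2.2.1.2.1 = q.2.2.2.1 + q.2.2.2.2.1 ∧
      q.2.2.1.2.2 = q.2.2.2.2.2)) :
    V.card ^ 4 ≤ S.card * N ^ 6 :=
  S_card_lower_bound_general N A B hB G hC V hV S hS
end

section
/- Let Z be an abelian group, let A, B be finite subsets of Z, and let G ⊆ A × B such that the map (a,b) ↦ a − b is injective on G. Define V = {(a,b,b') : (a,b), (a,b') ∈ G} and let T be the set of pairs (v_0, v_1) ∈ V^2, with v_i = (a_i, b_i, b'_i), satisfying a_0 + 2b_0 = a_1 + 2b_1 and b'_0 = b'_1. Then the map h : T → Z × Z × B defined by h(v_0, v_1) = (a_0 + b_0, a_0 + b'_0, b_1) is injective. -/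
/-- **Katz–Tao, injectivity of the map `h` in the proof of the `N^(7/4)` bound.**
Let `Z` be an abelian group, `A, B` finite subsets of `Z`, and `G ⊆ A × B` such that
`(a,b) ↦ a - b` is injective on `G`.  Let `V = {(a,b,b') : (a,b), (a,b') ∈ G}` and `T`
the set of pairs `(v₀,v₁) ∈ V²`, `vᵢ = (aᵢ,bᵢ,b'ᵢ)`, with `a₀+2b₀ = a₁+2b₁` and
`b'₀ = b'₁` (where `2b` means `b + b`).  Then `h(v₀,v₁) = (a₀+b₀, a₀+b'₀, b₁)` is
injective on `T`. -/
theorem h_injective_on_T {Z : Type*} [AddCommGroup Z]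
    (A B : Finset Z) (G : Finset (Z × Z)) (hG : G ⊆ A ×ˢ B)
    (hinj : ∀ p ∈ G, ∀ q ∈ G, p.1 - p.2 = q.1 - q.2 → p = q)
    (V : Set (Z × Z × Z))
    (hV : V = {v | (v.1, v.2.1) ∈ G ∧ (v.1, v.2.2) ∈ G})
    (T : Set ((Z × Z × Z) × (Z × Z × Z)))
    (hT : T = {q | q.1 ∈ V ∧ q.2 ∈ V ∧
      q.1.1 + (q.1.2.1 + q.1.2.1) = q.2.1 + (q.2.2.1 + q.2.2.1) ∧
      q.1.2.2 = q.2.2.2}) :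
    Set.InjOn (fun q : (Z × Z × Z) × (Z × Z × Z) =>
      (q.1.1 + q.1.2.1, q.1.1 + q.1.2.2, q.2.2.1)) T := by
  subst hT hV
  rintro ⟨⟨a0, b0, b0'⟩, a1, b1, b1'⟩ ⟨⟨h00, h01⟩, ⟨h10, h11⟩, hsum, hb'⟩
    ⟨⟨c0, d0, d0'⟩, c1, d1, d1'⟩ ⟨⟨k00, k01⟩, ⟨k10, k11⟩, ksum, kb'⟩ heq
  simp only [Prod.mk.injEq] at heq ⊢
  obtain ⟨e1, e2, e3⟩ := heq
  dsimp only at *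
  -- key: a1 - b1' = c1 - d1'
  have key : a1 - b1' = c1 - d1' := by
    have ha1 : a1 = a0 + (b0 + b0) - (b1 + b1) := by
      rw [hsum]; abel
    have hc1 : c1 = c0 + (d0 + d0) - (d1 + d1) := by
      rw [ksum]; abel
    rw [ha1, hc1, ← hb', ← kb', e3]
    have hd0 : d0 = a0 + b0 - c0 := by rw [e1]; abel
    have hd0' : d0' = a0 + b0' - c0 := by rw [e2]; abel
    rw [hd0, hd0']; abel
  have h2 := hinj _ h11 _ k11 key
  simp only [Prod.mk.injEq] at h2
  obtain ⟨ea1, eb1'⟩ := h2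
  have eb0' : b0' = d0' := by rw [hb', kb', eb1']
  have ea0 : a0 = c0 := by
    have := e2; rw [eb0'] at this
    exact add_right_cancel this
  have eb0 : b0 = d0 := by
    rw [ea0] at e1; exact add_left_cancel e1
  exact ⟨⟨ea0, eb0, eb0'⟩, ea1, e3, eb1'⟩
end

section
/- Let Z be an abelian group, let N be a positive integer, let A, B be finite subsets of Z with #A ≤ N and #B ≤ N, and let G ⊆ A × B such that the map (a,b) ↦ a − b is injective on G, #{a + b : (a,b) ∈ G} ≤ N, and #{a + 2b : (a,b) ∈ G} ≤ N. Then #G ≤ N^(7/4), i.e. (#G)^4 ≤ N^7. -/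
open Finset in
private lemma pair_count_aux {α β : Type*} [DecidableEq α] [DecidableEq β]
    (S : Finset α) (f : α → β) :
    S.card ^ 2 ≤ (S.image f).card * ((S ×ˢ S).filter fun x => f x.1 = f x.2).card := by
  have hfib : ∀ v, ((S ×ˢ S).filter fun x => f x.1 = f x.2).filter (fun x => f x.1 = v)
      = (S.filter fun a => f a = v) ×ˢ (S.filter fun a => f a = v) := by
    intro v
    ext x
    simp only [Finset.mem_filter, Finset.mem_product]
    constructor
    · rintro ⟨⟨⟨h1, h2⟩, h3⟩, h4⟩
      exact ⟨⟨h1, h4⟩, h2, by rw [← h3]; exact h4⟩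
    · rintro ⟨⟨h1, h4⟩, h2, h5⟩
      exact ⟨⟨⟨h1, h2⟩, by rw [h4, h5]⟩, h4⟩
  have h1 : S.card = ∑ v ∈ S.image f, (S.filter fun a => f a = v).card :=
    Finset.card_eq_sum_card_fiberwise fun x hx => Finset.mem_image_of_mem f hx
  have hmem : ∀ x ∈ (S ×ˢ S).filter fun x => f x.1 = f x.2, f x.1 ∈ S.image f := fun x hx =>
    Finset.mem_image_of_mem f (Finset.mem_product.mp (Finset.mem_filter.mp hx).1).1
  have h2 : ((S ×ˢ S).filter fun x => f x.1 = f x.2).card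
      = ∑ v ∈ S.image f, (S.filter fun a => f a = v).card ^ 2 :=
    (Finset.card_eq_sum_card_fiberwise hmem).trans
      (Finset.sum_congr rfl fun v _ => by rw [hfib v, Finset.card_product, sq])
  have hcs := sq_sum_le_card_mul_sum_sq (s := S.image f)
    (f := fun v => ((S.filter fun a => f a = v).card : ℤ))
  have hle : ((S.card : ℤ))^2 ≤ ((S.image f).card : ℤ) *
      (((S ×ˢ S).filter fun x => f x.1 = f x.2).card : ℤ) := by
    rw [h1, h2]; push_cast; exact hcs
  exact_mod_cast hle

/-- **Katz–Tao, inequality (16): `#G ≤ N^(7/4)` under the injectivity reduction.**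
Let `Z` be an abelian group, `N` a positive integer, `A, B` finite subsets of `Z` with
`#A ≤ N`, `#B ≤ N`, and `G ⊆ A × B` such that `(a,b) ↦ a - b` is injective on `G`,
`#{a + b : (a,b) ∈ G} ≤ N` and `#{a + 2b : (a,b) ∈ G} ≤ N` (where `2b` means `b + b`).
Then `(#G)⁴ ≤ N⁷`. -/
theorem G_card_upper_bound_seven_fourths {Z : Type*} [AddCommGroup Z] [DecidableEq Z]
    (N : ℕ) (hN : 0 < N) (A B : Finset Z) (hA : A.card ≤ N) (hB : B.card ≤ N)
    (G : Finset (Z × Z)) (hG : G ⊆ A ×ˢ B)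
    (hinj : ∀ p ∈ G, ∀ q ∈ G, p.1 - p.2 = q.1 - q.2 → p = q)
    (hC : (G.image (fun p => p.1 + p.2)).card ≤ N)
    (hD : (G.image (fun p => p.1 + (p.2 + p.2))).card ≤ N) :
    G.card ^ 4 ≤ N ^ 7 := by
  -- T : pairs of points of G with the same first coordinate
  set T : Finset ((Z × Z) × (Z × Z)) :=
    (G ×ˢ G).filter (fun x => x.1.1 = x.2.1) with hT
  -- Q : pairs of elements of T linked by equal sums, coordinatewise
  set f2 : ((Z × Z) × (Z × Z)) → Z × Z := fun pq => (pq.1.1 + pq.1.2, pq.2.1 + pq.2.2) with hf2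
  set Q : Finset (((Z × Z) × (Z × Z)) × ((Z × Z) × (Z × Z))) :=
    (T ×ˢ T).filter (fun x => f2 x.1 = f2 x.2) with hQ
  -- Step 1 : G.card ^ 2 ≤ N * T.card
  have himA : (G.image (fun p : Z × Z => p.1)).card ≤ N := by
    refine le_trans (Finset.card_le_card ?_) hA
    intro v hv
    obtain ⟨p, hp, rfl⟩ := Finset.mem_image.mp hv
    exact (Finset.mem_product.mp (hG hp)).1
  have hs1 : G.card ^ 2 ≤ N * T.card := by
    calc G.card ^ 2
        ≤ (G.image (fun p : Z × Z => p.1)).card *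
            ((G ×ˢ G).filter fun x => (fun p : Z × Z => p.1) x.1 =
              (fun p : Z × Z => p.1) x.2).card := pair_count_aux G _
      _ ≤ N * T.card := Nat.mul_le_mul himA (le_of_eq rfl)
  -- Step 2 : T.card ^ 2 ≤ N ^ 2 * Q.card
  have himT : (T.image f2).card ≤ N ^ 2 := by
    have hsub : T.image f2 ⊆
        (G.image (fun p => p.1 + p.2)) ×ˢ (G.image (fun p => p.1 + p.2)) := by
      intro v hv
      obtain ⟨pq, hpq, rfl⟩ := Finset.mem_image.mp hv
      have h1 := Finset.mem_product.mp (Finset.mem_filter.mp hpq).1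
      exact Finset.mem_product.mpr
        ⟨Finset.mem_image_of_mem _ h1.1, Finset.mem_image_of_mem _ h1.2⟩
    calc (T.image f2).card
        ≤ ((G.image (fun p => p.1 + p.2)) ×ˢ (G.image (fun p => p.1 + p.2))).card :=
          Finset.card_le_card hsub
      _ = (G.image (fun p => p.1 + p.2)).card * (G.image (fun p => p.1 + p.2)).card :=
          Finset.card_product _ _
      _ ≤ N * N := Nat.mul_le_mul hC hC
      _ = N ^ 2 := (sq N).symm
  have hs2 : T.card ^ 2 ≤ N ^ 2 * Q.card := by
    calc T.card ^ 2
        ≤ (T.image f2).card * ((T ×ˢ T).filter fun x => f2 x.1 = f2 x.2).card :=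
          pair_count_aux T f2
      _ ≤ N ^ 2 * Q.card := Nat.mul_le_mul himT (le_of_eq rfl)
  -- Step 3 : Q.card ≤ N ^ 3, via an injection using hinj
  have hs3 : Q.card ≤ N ^ 3 := by
    set D' : Finset Z := G.image (fun p => p.1 + (p.2 + p.2)) with hD'
    have hU : (B ×ˢ (D' ×ˢ B)).card ≤ N ^ 3 := by
      rw [Finset.card_product, Finset.card_product]
      calc B.card * (D'.card * B.card) ≤ N * (N * N) :=
            Nat.mul_le_mul hB (Nat.mul_le_mul hD hB)
        _ = N ^ 3 := by ring
    refine le_trans (Finset.card_le_card_of_injOn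
      (fun x => (x.1.1.2, (x.1.2.1 + (x.1.2.2 + x.1.2.2), x.2.2.2))) ?_ ?_) hU
    · -- maps into B ×ˢ (D' ×ˢ B)
      intro x hx
      have hxT := Finset.mem_product.mp (Finset.mem_filter.mp hx).1
      have h1 := Finset.mem_product.mp (Finset.mem_filter.mp hxT.1).1
      have h2 := Finset.mem_product.mp (Finset.mem_filter.mp hxT.2).1
      refine Finset.mem_product.mpr ⟨(Finset.mem_product.mp (hG h1.1)).2,
        Finset.mem_product.mpr ⟨Finset.mem_image_of_mem _ h1.2,
          (Finset.mem_product.mp (hG h2.2)).2⟩⟩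
    · -- injectivity on Q
      intro x hx y hy hΦ
      rw [Finset.mem_coe] at hx hy
      obtain ⟨⟨p, q⟩, r, w⟩ := x
      obtain ⟨⟨p', q'⟩, r', w'⟩ := y
      -- unpack membership of x
      have hxQ := Finset.mem_filter.mp hx
      have hxT := Finset.mem_product.mp hxQ.1
      have hT1 := Finset.mem_filter.mp hxT.1
      have hT2 := Finset.mem_filter.mp hxT.2
      have hpG : p ∈ G := (Finset.mem_product.mp hT1.1).1
      have hqG : q ∈ G := (Finset.mem_product.mp hT1.1).2
      have hrG : r ∈ G := (Finset.mem_product.mp hT2.1).1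
      have hwG : w ∈ G := (Finset.mem_product.mp hT2.1).2
      have hpa : p.1 = q.1 := hT1.2
      have hra : r.1 = w.1 := hT2.2
      have hpr : p.1 + p.2 = r.1 + r.2 := congrArg Prod.fst hxQ.2
      have hqw : q.1 + q.2 = w.1 + w.2 := congrArg Prod.snd hxQ.2
      -- unpack membership of y
      have hyQ := Finset.mem_filter.mp hy
      have hyT := Finset.mem_product.mp hyQ.1
      have hT1' := Finset.mem_filter.mp hyT.1
      have hT2' := Finset.mem_filter.mp hyT.2
      have hpG' : p' ∈ G := (Finset.mem_product.mp hT1'.1).1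
      have hqG' : q' ∈ G := (Finset.mem_product.mp hT1'.1).2
      have hrG' : r' ∈ G := (Finset.mem_product.mp hT2'.1).1
      have hwG' : w' ∈ G := (Finset.mem_product.mp hT2'.1).2
      have hpa' : p'.1 = q'.1 := hT1'.2
      have hra' : r'.1 = w'.1 := hT2'.2
      have hpr' : p'.1 + p'.2 = r'.1 + r'.2 := congrArg Prod.fst hyQ.2
      have hqw' : q'.1 + q'.2 = w'.1 + w'.2 := congrArg Prod.snd hyQ.2
      -- unpack the image equality
      have hb1 : p.2 = p'.2 := congrArg Prod.fst hΦ
      have hd : q.1 + (q.2 + q.2) = q'.1 + (q'.2 + q'.2) := congrArg (fun z => z.2.1) hΦ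
      have hb4 : w.2 = w'.2 := congrArg (fun z => z.2.2) hΦ
      -- the key step : r and r' have the same difference
      have hr2 : r.2 = p.1 + p.2 - r.1 := eq_sub_of_add_eq' hpr.symm
      have hr2' : r'.2 = p'.1 + p'.2 - r'.1 := eq_sub_of_add_eq' hpr'.symm
      have hw1 : w.1 = q.1 + q.2 - w.2 := eq_sub_of_add_eq hqw.symm
      have hw1' : w'.1 = q'.1 + q'.2 - w'.2 := eq_sub_of_add_eq hqw'.symm
      have key : r.1 - r.2 = r'.1 - r'.2 := by
        calc r.1 - r.2
            = (q.1 + (q.2 + q.2)) - (w.2 + w.2) - p.2 := by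
              rw [hr2, hra, hw1, hpa]; abel
          _ = (q'.1 + (q'.2 + q'.2)) - (w'.2 + w'.2) - p'.2 := by rw [hd, hb4, hb1]
          _ = r'.1 - r'.2 := by rw [hr2', hra', hw1', hpa']; abel
      have hrr : r = r' := hinj r hrG r' hrG' key
      have hww : w = w' := Prod.ext_iff.mpr ⟨by rw [← hra, hrr, hra'], hb4⟩
      have e1 : q.1 + q.2 = q'.1 + q'.2 := by rw [hqw, hww, ← hqw']
      have hq2 : q.2 = q'.2 := by
        calc q.2 = (q.1 + (q.2 + q.2)) - (q.1 + q.2) := by abel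
          _ = (q'.1 + (q'.2 + q'.2)) - (q'.1 + q'.2) := by rw [hd, e1]
          _ = q'.2 := by abel
      have hq1 : q.1 = q'.1 := by
        have h := e1; rw [hq2] at h; exact add_right_cancel h
      have hqq : q = q' := Prod.ext_iff.mpr ⟨hq1, hq2⟩
      have hpp : p = p' := Prod.ext_iff.mpr ⟨by rw [hpa, hq1, ← hpa'], hb1⟩
      simp only [Prod.mk.injEq]
      exact ⟨⟨hpp, hqq⟩, hrr, hww⟩
  -- assemble
  calc G.card ^ 4 = (G.card ^ 2) ^ 2 := by ring
    _ ≤ (N * T.card) ^ 2 := Nat.pow_le_pow_left hs1 2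
    _ = N ^ 2 * T.card ^ 2 := by ring
    _ ≤ N ^ 2 * (N ^ 2 * Q.card) := Nat.mul_le_mul_left _ hs2
    _ = N ^ 4 * Q.card := by ring
    _ ≤ N ^ 4 * N ^ 3 := Nat.mul_le_mul_left _ hs3
    _ = N ^ 7 := by ring
end

section
/- For every positive integer n there exist finite sets A, B ⊆ ℤ and G ⊆ A × B such that #A ≤ 3^n, #B ≤ 3^n, #{a + b : (a,b) ∈ G} ≤ 3^n, and #{a − b : (a,b) ∈ G} = 6^n. Explicitly, taking M ≥ 7, one may take A = B to be the set of integers 0 ≤ a < M^n all of whose base-M digits lie in {0,1,3}, and G = {(a,b) ∈ A × B : the i-th base-M digits of a and b differ for all 0 ≤ i < n}. -/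
/-!
Every `a ∈ A` is `∑ xᵢ Mⁱ` with digits `xᵢ ∈ {0, 1, 3}`, so the pairs of `G` are parametrised by
choosing, in each position, one of the six ordered pairs `(x, y)` of distinct digits. Because
digits never carry, sums and differences are computed digitwise: the digit sums `x + y` take
only the three values `1, 3, 4`, whereas the digit differences `x - y` take the six values
`±1, ±2, ±3`. These lie in a window of length `7 ≤ M`, so signed digit vectors are still
determined by the integer they represent, and `a - b` takes `6ⁿ` values.
-/

open Finset

def ofDigitVec (M : ℤ) {n : ℕ} (f : Fin n → ℤ) : ℤ :=
  ∑ i, f i * M ^ (i : ℕ)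

section ofDigitVec

variable {M : ℤ} {n : ℕ}

theorem ofDigitVec_succ (f : Fin (n + 1) → ℤ) :
    ofDigitVec M f = f 0 + M * ofDigitVec M (Fin.tail f) := by
  simp only [ofDigitVec, Fin.sum_univ_succ, mul_sum, Fin.tail]
  congr 1
  · simp
  · exact sum_congr rfl fun i _ => by rw [Fin.val_succ, pow_succ]; ring

theorem ofDigitVec_sub (f g : Fin n → ℤ) :
    ofDigitVec M (f - g) = ofDigitVec M f - ofDigitVec M g := by
  simp only [ofDigitVec, Pi.sub_apply, sub_mul, sum_sub_distrib]

theorem ofDigitVec_mem_Ico (hM : 0 < M) {f : Fin n → ℤ} (hf : ∀ i, f i ∈ Ico 0 M) :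
    ofDigitVec M f ∈ Ico 0 (M ^ n) := by
  induction n with
  | zero => simp [ofDigitVec]
  | succ n ih =>
    have h0 := mem_Ico.1 (hf 0)
    have htail := mem_Ico.1 (ih (f := Fin.tail f) fun i => hf i.succ)
    rw [ofDigitVec_succ, mem_Ico, pow_succ']
    constructor <;> nlinarith

theorem ofDigitVec_div_pow_emod (hM : 0 < M) {f : Fin n → ℤ} (hf : ∀ i, f i ∈ Ico 0 M)
    (i : Fin n) : ofDigitVec M f / M ^ (i : ℕ) % M = f i := by
  induction n with
  | zero => exact i.elim0
  | succ n ih =>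
    have h0 := mem_Ico.1 (hf 0)
    rw [ofDigitVec_succ]
    cases i using Fin.cases with
    | zero => simp [Int.add_mul_emod_self_left, Int.emod_eq_of_lt h0.1 h0.2]
    | succ j =>
      have hquot : (f 0 + M * ofDigitVec M (Fin.tail f)) / M = ofDigitVec M (Fin.tail f) := by
        rw [Int.add_mul_ediv_left _ _ hM.ne', Int.ediv_eq_zero_of_lt h0.1 h0.2, zero_add]
      rw [Fin.val_succ, pow_succ', ← Int.ediv_ediv_of_nonneg hM.le, hquot]
      exact ih (fun i => hf i.succ) j

theorem ofDigitVec_digits (hM : 0 < M) {a : ℤ} (ha : a ∈ Ico 0 (M ^ n)) :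
    ofDigitVec M (fun i : Fin n => a / M ^ (i : ℕ) % M) = a := by
  induction n generalizing a with
  | zero => simp_all [ofDigitVec]; omega
  | succ n ih =>
    have ha' := mem_Ico.1 ha
    have hquot : a / M ∈ Ico 0 (M ^ n) := mem_Ico.2
      ⟨Int.ediv_nonneg ha'.1 hM.le, Int.ediv_lt_of_lt_mul hM (by rw [← pow_succ]; exact ha'.2)⟩
    have htail : Fin.tail (fun i : Fin (n + 1) => a / M ^ (i : ℕ) % M)
        = fun i : Fin n => a / M / M ^ (i : ℕ) % M := by
      ext i
      simp [Fin.tail, pow_succ', Int.ediv_ediv_of_nonneg hM.le]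
    rw [ofDigitVec_succ, htail, ih hquot]
    simpa using Int.emod_add_mul_ediv a M

theorem ofDigitVec_injOn (hM : 0 < M) (c : ℤ) :
    Set.InjOn (ofDigitVec M) {f : Fin n → ℤ | ∀ i, f i ∈ Ico c (c + M)} := by
  intro f hf g hg hfg
  have shift : ∀ h : Fin n → ℤ, (∀ i, h i ∈ Ico c (c + M)) →
      ∀ i, (h - fun _ : Fin n => c) i ∈ Ico 0 M :=
    fun h hh i => by have := mem_Ico.1 (hh i); rw [Pi.sub_apply, mem_Ico]; omega
  have hshift : ofDigitVec M (f - fun _ => c) = ofDigitVec M (g - fun _ => c) := by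
    rw [ofDigitVec_sub, ofDigitVec_sub, hfg]
  funext i
  simpa [ofDigitVec_div_pow_emod hM (shift f hf), ofDigitVec_div_pow_emod hM (shift g hg)]
    using congrArg (· / M ^ (i : ℕ) % M) hshift

end ofDigitVec

noncomputable def withDigitsIn (M : ℤ) (n : ℕ) (D : Finset ℤ) : Finset ℤ :=
  (Ico 0 (M ^ n)).filter fun a => ∀ i < n, a / M ^ i % M ∈ D

def ofDigitVecPair (M : ℤ) {n : ℕ} (w : Fin n → ℤ × ℤ) : ℤ × ℤ :=
  (ofDigitVec M fun i => (w i).1, ofDigitVec M fun i => (w i).2)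

section digitSets

variable {M : ℤ} {n : ℕ} {D : Finset ℤ}

theorem map_ofDigitVecPair (φ : ℤ × ℤ →+ ℤ) (w : Fin n → ℤ × ℤ) :
    φ (ofDigitVecPair M w) = ofDigitVec M fun i => φ (w i) := by
  have hsum : ofDigitVecPair M w = ∑ i : Fin n, M ^ (i : ℕ) • w i := by
    ext <;> simp [ofDigitVecPair, ofDigitVec, Prod.fst_sum, Prod.snd_sum, mul_comm]
  rw [hsum, map_sum]
  simp only [map_zsmul, smul_eq_mul, ofDigitVec, mul_comm]

theorem withDigitsIn_eq_image (hM : 0 < M) (hD : D ⊆ Ico 0 M) :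
    withDigitsIn M n D = (Fintype.piFinset fun _ : Fin n => D).image (ofDigitVec M) := by
  ext a
  simp only [withDigitsIn, mem_filter, mem_image, Fintype.mem_piFinset]
  constructor
  · rintro ⟨ha, hdigits⟩
    exact ⟨_, fun i => hdigits i i.isLt, ofDigitVec_digits hM ha⟩
  · rintro ⟨f, hf, rfl⟩
    refine ⟨ofDigitVec_mem_Ico hM fun i => hD (hf i), fun i hi => ?_⟩
    rw [ofDigitVec_div_pow_emod hM (fun i => hD (hf i)) ⟨i, hi⟩]
    exact hf _

theorem filter_digits_ne_eq_image (hM : 0 < M) (hD : D ⊆ Ico 0 M) :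
    (withDigitsIn M n D ×ˢ withDigitsIn M n D).filter
        (fun p => ∀ i < n, p.1 / M ^ i % M ≠ p.2 / M ^ i % M)
      = (Fintype.piFinset fun _ : Fin n => D.offDiag).image (ofDigitVecPair M) := by
  ext ⟨a, b⟩
  simp only [withDigitsIn_eq_image hM hD, mem_filter, mem_product, mem_image,
    Fintype.mem_piFinset, mem_offDiag, ofDigitVecPair, Prod.mk.injEq]
  constructor
  · rintro ⟨⟨⟨f, hf, rfl⟩, ⟨g, hg, rfl⟩⟩, hne⟩
    refine ⟨fun i => (f i, g i), fun i => ⟨hf i, hg i, ?_⟩, rfl, rfl⟩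
    simpa only [ofDigitVec_div_pow_emod hM (fun i => hD (hf i)),
      ofDigitVec_div_pow_emod hM (fun i => hD (hg i))] using hne i i.isLt
  · rintro ⟨w, hw, rfl, rfl⟩
    refine ⟨⟨⟨_, fun i => (hw i).1, rfl⟩, ⟨_, fun i => (hw i).2.1, rfl⟩⟩, fun i hi => ?_⟩
    rw [ofDigitVec_div_pow_emod hM (fun i => hD (hw i).1) ⟨i, hi⟩,
      ofDigitVec_div_pow_emod hM (fun i => hD (hw i).2.1) ⟨i, hi⟩]
    exact (hw ⟨i, hi⟩).2.2

theorem image_image_ofDigitVecPair (φ : ℤ × ℤ →+ ℤ) (E : Finset (ℤ × ℤ)) :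
    ((Fintype.piFinset fun _ : Fin n => E).image (ofDigitVecPair M)).image φ
      = (Fintype.piFinset fun _ : Fin n => E.image φ).image (ofDigitVec M) := by
  rw [image_image, Fintype.piFinset_image, image_image]
  exact image_congr fun w _ => map_ofDigitVecPair φ w

end digitSets

section card

variable {M : ℤ} {n : ℕ} {T : Finset ℤ}

theorem card_image_ofDigitVec_le :
    ((Fintype.piFinset fun _ : Fin n => T).image (ofDigitVec M)).card ≤ T.card ^ n :=
  card_image_le.trans (by simp)

theorem card_image_ofDigitVec (hM : 0 < M) {c : ℤ} (hT : T ⊆ Ico c (c + M)) :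
    ((Fintype.piFinset fun _ : Fin n => T).image (ofDigitVec M)).card = T.card ^ n := by
  rw [card_image_of_injOn, Fintype.card_piFinset, prod_const, card_univ, Fintype.card_fin]
  exact (ofDigitVec_injOn hM c).mono fun f hf i => hT (Fintype.mem_piFinset.1 hf i)

end card

theorem ruzsa_example_sum_general (n M : ℕ) (hM : 7 ≤ M)
    (A B : Finset ℤ)
    (hA : A = (Finset.Ico (0 : ℤ) ((M : ℤ) ^ n)).filter
      (fun a => ∀ i < n, a / (M : ℤ) ^ i % (M : ℤ) ∈ ({0, 1, 3} : Finset ℤ)))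
    (hB : B = A)
    (G : Finset (ℤ × ℤ))
    (hG : G = (A ×ˢ B).filter
      (fun p => ∀ i < n, p.1 / (M : ℤ) ^ i % (M : ℤ) ≠ p.2 / (M : ℤ) ^ i % (M : ℤ))) :
    G ⊆ A ×ˢ B ∧ A.card ≤ 3 ^ n ∧ B.card ≤ 3 ^ n ∧
      (G.image (fun p => p.1 + p.2)).card ≤ 3 ^ n ∧
      (G.image (fun p => p.1 - p.2)).card = 6 ^ n := by
  subst B
  have hM0 : (0 : ℤ) < M := by omega
  have hD : ({0, 1, 3} : Finset ℤ) ⊆ Ico 0 (M : ℤ) := by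
    intro d hd
    simp only [mem_insert, mem_singleton] at hd
    rw [mem_Ico]
    omega
  have hAcard : A.card ≤ 3 ^ n := by
    rw [hA, ← withDigitsIn, withDigitsIn_eq_image hM0 hD]
    exact card_image_ofDigitVec_le
  have hGimg : G = (Fintype.piFinset fun _ : Fin n => ({0, 1, 3} : Finset ℤ).offDiag).image
      (ofDigitVecPair M) := by
    rw [hG, hA, ← withDigitsIn]
    exact filter_digits_ne_eq_image hM0 hD
  refine ⟨hG ▸ filter_subset _ _, hAcard, hAcard, ?_, ?_⟩
  · rw [show (fun p : ℤ × ℤ => p.1 + p.2) = ⇑(AddMonoidHom.fst ℤ ℤ + AddMonoidHom.snd ℤ ℤ) from rfl,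
      hGimg, image_image_ofDigitVecPair]
    -- the sums of two distinct digits from `{0, 1, 3}` are `{1, 3, 4}`
    exact card_image_ofDigitVec_le.trans_eq rfl
  · -- the differences of two distinct digits from `{0, 1, 3}` are `{±1, ±2, ±3}` ⊆ `[-3, 4)`
    rw [show (fun p : ℤ × ℤ => p.1 - p.2) = ⇑(AddMonoidHom.fst ℤ ℤ - AddMonoidHom.snd ℤ ℤ) from rfl,
      hGimg, image_image_ofDigitVecPair, card_image_ofDigitVec hM0 (c := -3)]
    · rfl
    · refine (show _ ⊆ Ico (-3) 4 by decide).trans (Ico_subset_Ico le_rfl ?_)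
      omega

/-- **Katz–Tao, first converse example (Ruzsa-type).**  For every positive integer `n`
there exist finite sets `A, B ⊆ ℤ` and `G ⊆ A × B` with `#A ≤ 3ⁿ`, `#B ≤ 3ⁿ`,
`#{a + b : (a,b) ∈ G} ≤ 3ⁿ`, and `#{a - b : (a,b) ∈ G} = 6ⁿ`.  Explicitly, for any
`M ≥ 7` one may take `A = B` to be the integers `0 ≤ a < Mⁿ` all of whose base-`M`
digits lie in `{0,1,3}` and `G` the set of pairs whose base-`M` digits differ in every
position `i < n` (the `i`-th base-`M` digit of `a` being `a / Mⁱ % M`). -/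
theorem ruzsa_example_sum (n M : ℕ) (hn : 0 < n) (hM : 7 ≤ M)
    (A B : Finset ℤ)
    (hA : A = (Finset.Ico (0 : ℤ) ((M : ℤ) ^ n)).filter
      (fun a => ∀ i < n, a / (M : ℤ) ^ i % (M : ℤ) ∈ ({0, 1, 3} : Finset ℤ)))
    (hB : B = A)
    (G : Finset (ℤ × ℤ))
    (hG : G = (A ×ˢ B).filter
      (fun p => ∀ i < n, p.1 / (M : ℤ) ^ i % (M : ℤ) ≠ p.2 / (M : ℤ) ^ i % (M : ℤ))) :
    G ⊆ A ×ˢ B ∧ A.card ≤ 3 ^ n ∧ B.card ≤ 3 ^ n ∧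
      (G.image (fun p => p.1 + p.2)).card ≤ 3 ^ n ∧
      (G.image (fun p => p.1 - p.2)).card = 6 ^ n :=
  ruzsa_example_sum_general n M hM A B hA hB G hG
end

section
/- For every positive integer n there exist finite sets A, B ⊆ ℤ and G ⊆ A × B such that #A ≤ 4^n, #B ≤ 4^n, #{a + b : (a,b) ∈ G} ≤ 4^n, #{a + 2b : (a,b) ∈ G} ≤ 4^n, and #{a − b : (a,b) ∈ G} = 8^n. Explicitly, taking M > 8, one may take A (resp. B) to be the integers 0 ≤ x < M^n all of whose base-M digits lie in {0,2,3,4} (resp. {0,1,2,3}), and G the set of pairs (a,b) such that for every 0 ≤ i < n the pair of i-th digits (d_i(a), d_i(b)) lies in {(4,0), (2,1), (3,1), (4,1), (0,2), (2,2), (0,3), (2,3)}. -/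
section RuzsaAux

private lemma rz_div_step (M t r q : ℤ) (hM : 0 < M) (ht : 0 < t) (h0 : 0 ≤ r) (h1 : r < M) :
    (r + M * q) / (M * t) = q / t := by
  have h2 : 0 ≤ q % t := Int.emod_nonneg q ht.ne'
  have h3 : q % t < t := Int.emod_lt_of_pos q ht
  have key : r + M * q = (r + M * (q % t)) + (M * t) * (q / t) := by
    conv_lhs => rw [← Int.emod_add_mul_ediv q t]
    ring
  rw [key, Int.add_mul_ediv_left _ _ (by positivity : (M * t) ≠ 0),
    Int.ediv_eq_zero_of_lt (by positivity) (by nlinarith), zero_add]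

private lemma rz_esum_succ (M : ℤ) {n : ℕ} (f : Fin (n + 1) → ℤ) :
    ∑ i : Fin (n + 1), f i * M ^ (i : ℕ)
      = f 0 + M * ∑ i : Fin n, f i.succ * M ^ (i : ℕ) := by
  rw [Fin.sum_univ_succ, Finset.mul_sum]
  simp only [Fin.val_zero, pow_zero, mul_one, Fin.val_succ, pow_succ]
  congr 1
  refine Finset.sum_congr rfl fun i _ => by ring

private lemma rz_esum_mem (M : ℤ) : ∀ {n : ℕ} (f : Fin n → ℤ),
    (∀ i, f i ∈ Finset.Ico 0 M) →
    (0 ≤ ∑ i, f i * M ^ (i : ℕ) ∧ (∑ i, f i * M ^ (i : ℕ)) < M ^ n) := by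
  intro n
  induction n with
  | zero => intro f _; simp
  | succ n ih =>
    intro f hf
    obtain ⟨h0, h1⟩ := Finset.mem_Ico.1 (hf 0)
    obtain ⟨h2, h3⟩ := ih (fun i => f i.succ) (fun i => hf i.succ)
    rw [rz_esum_succ]
    have hM : 0 < M := lt_of_le_of_lt h0 h1
    constructor
    · positivity
    · rw [pow_succ]; nlinarith

private lemma rz_esum_digit (M : ℤ) : ∀ {n : ℕ} (f : Fin n → ℤ),
    (∀ i, f i ∈ Finset.Ico 0 M) →
    ∀ i : Fin n, (∑ j, f j * M ^ (j : ℕ)) / M ^ (i : ℕ) % M = f i := by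
  intro n
  induction n with
  | zero => intro f _ i; exact absurd i.isLt (by omega)
  | succ n ih =>
    intro f hf i
    obtain ⟨h0, h1⟩ := Finset.mem_Ico.1 (hf 0)
    have hM : 0 < M := lt_of_le_of_lt h0 h1
    rw [rz_esum_succ]
    refine Fin.cases ?_ ?_ i
    · simp only [Fin.val_zero, pow_zero, Int.ediv_one]
      rw [Int.add_mul_emod_self_left, Int.emod_eq_of_lt h0 h1]
    · intro j
      have : (M : ℤ) ^ ((j.succ : Fin (n + 1)) : ℕ) = M * M ^ (j : ℕ) := by
        simp [Fin.val_succ, pow_succ]; ring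
      rw [this, rz_div_step M (M ^ (j : ℕ)) _ _ hM (by positivity) h0 h1]
      exact ih (fun i => f i.succ) (fun i => hf i.succ) j

private lemma rz_esum_expand (M : ℤ) (hM : 0 < M) : ∀ (n : ℕ) (x : ℤ), 0 ≤ x → x < M ^ n →
    (∑ i : Fin n, (x / M ^ (i : ℕ) % M) * M ^ (i : ℕ)) = x := by
  intro n
  induction n with
  | zero => intro x h0 h1; simp at h1 ⊢; omega
  | succ n ih =>
    intro x h0 h1
    rw [rz_esum_succ]
    have key : ∀ i : Fin n, x / M ^ ((i.succ : Fin (n + 1)) : ℕ) % M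
        = (x / M) / M ^ (i : ℕ) % M := by
      intro i
      congr 1
      have hx : x = x % M + M * (x / M) := (Int.emod_add_mul_ediv x M).symm
      have : (M : ℤ) ^ ((i.succ : Fin (n + 1)) : ℕ) = M * M ^ (i : ℕ) := by
        simp [Fin.val_succ, pow_succ]; ring
      rw [this]
      conv_lhs => rw [hx]
      exact rz_div_step M _ _ _ hM (by positivity) (Int.emod_nonneg x hM.ne')
        (Int.emod_lt_of_pos x hM)
    simp only [Fin.val_zero, pow_zero, Int.ediv_one]
    rw [Finset.sum_congr rfl (fun i _ => by rw [key i])]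
    rw [ih (x / M) (Int.ediv_nonneg h0 hM.le) (by
      rw [pow_succ] at h1
      exact Int.ediv_lt_of_lt_mul hM (by linarith))]
    exact Int.emod_add_mul_ediv x M

private lemma rz_card_le_esum (M : ℤ) {n : ℕ} (S : Finset ℤ) (X : Finset ℤ)
    (hX : ∀ x ∈ X, ∃ f : Fin n → ℤ, (∀ i, f i ∈ S) ∧ x = ∑ i, f i * M ^ (i : ℕ)) :
    X.card ≤ S.card ^ n := by
  have hsub : X ⊆ (Fintype.piFinset fun _ : Fin n => S).image
      (fun f : Fin n → ℤ => ∑ i, f i * M ^ (i : ℕ)) := by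
    intro x hx
    obtain ⟨f, hf, rfl⟩ := hX x hx
    exact Finset.mem_image.2 ⟨f, Fintype.mem_piFinset.2 hf, rfl⟩
  calc X.card ≤ _ := Finset.card_le_card hsub
    _ ≤ (Fintype.piFinset fun _ : Fin n => S).card := Finset.card_image_le
    _ = S.card ^ n := by rw [Fintype.card_piFinset]; simp

private lemma rz_card_eq_esum (M : ℤ) (hM : 8 < M) {n : ℕ} (S : Finset ℤ)
    (hS : ∀ v ∈ S, -3 ≤ v ∧ v ≤ 4) (X : Finset ℤ)
    (h1 : ∀ x ∈ X, ∃ f : Fin n → ℤ, (∀ i, f i ∈ S) ∧ x = ∑ i, f i * M ^ (i : ℕ))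
    (h2 : ∀ f : Fin n → ℤ, (∀ i, f i ∈ S) → (∑ i, f i * M ^ (i : ℕ)) ∈ X) :
    X.card = S.card ^ n := by
  have hXeq : X = (Fintype.piFinset fun _ : Fin n => S).image
      (fun f : Fin n → ℤ => ∑ i, f i * M ^ (i : ℕ)) := by
    apply Finset.Subset.antisymm
    · intro x hx; obtain ⟨f, hf, rfl⟩ := h1 x hx
      exact Finset.mem_image.2 ⟨f, Fintype.mem_piFinset.2 hf, rfl⟩
    · intro x hx; obtain ⟨f, hf, rfl⟩ := Finset.mem_image.1 hx
      exact h2 f (Fintype.mem_piFinset.1 hf)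
  rw [hXeq, Finset.card_image_of_injOn, Fintype.card_piFinset]
  · simp
  · intro f hf g hg hfg
    simp only [Finset.mem_coe, Fintype.mem_piFinset] at hf hg
    have hb : ∀ (h : Fin n → ℤ), (∀ i, h i ∈ S) →
        ∀ i, h i + 3 ∈ Finset.Ico 0 M := by
      intro h hh i
      obtain ⟨l, u⟩ := hS _ (hh i)
      exact Finset.mem_Ico.2 ⟨by linarith, by linarith⟩
    have e1 : ∀ (h : Fin n → ℤ), (∑ j, (h j + 3) * M ^ (j : ℕ))
        = (∑ j, h j * M ^ (j : ℕ)) + ∑ j : Fin n, 3 * M ^ (j : ℕ) := by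
      intro h
      rw [← Finset.sum_add_distrib]
      exact Finset.sum_congr rfl fun i _ => by ring
    funext i
    have d1 := rz_esum_digit M (fun j => f j + 3) (hb f hf) i
    have d2 := rz_esum_digit M (fun j => g j + 3) (hb g hg) i
    simp only at hfg
    rw [e1 f, hfg, ← e1 g, d2] at d1
    linarith [d1]

private def rz_rr : ℤ → ℤ × ℤ := fun v =>
  if v = 4 then (4, 0) else if v = 1 then (2, 1) else if v = 2 then (3, 1) else
  if v = 3 then (4, 1) else if v = -2 then (0, 2) else if v = 0 then (2, 2) else
  if v = -3 then (0, 3) else (2, 3)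

private lemma rz_rr_spec (v : ℤ) (hv : v ∈ ({4, 1, 2, 3, -2, 0, -3, -1} : Finset ℤ)) :
    (rz_rr v).1 ∈ ({0, 2, 3, 4} : Finset ℤ) ∧ (rz_rr v).2 ∈ ({0, 1, 2, 3} : Finset ℤ) ∧
    ((rz_rr v).1, (rz_rr v).2) ∈
      ({(4, 0), (2, 1), (3, 1), (4, 1), (0, 2), (2, 2), (0, 3), (2, 3)} : Finset (ℤ × ℤ)) ∧
    (rz_rr v).1 - (rz_rr v).2 = v ∧ 0 ≤ (rz_rr v).1 ∧ (rz_rr v).1 ≤ 4 ∧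
    0 ≤ (rz_rr v).2 ∧ (rz_rr v).2 ≤ 3 := by
  fin_cases hv <;> decide

end RuzsaAux

/-- **Katz–Tao, second converse example.**  For every positive integer `n` there exist
finite sets `A, B ⊆ ℤ` and `G ⊆ A × B` with `#A ≤ 4ⁿ`, `#B ≤ 4ⁿ`,
`#{a + b : (a,b) ∈ G} ≤ 4ⁿ`, `#{a + 2b : (a,b) ∈ G} ≤ 4ⁿ`, and
`#{a - b : (a,b) ∈ G} = 8ⁿ`.  Explicitly, for any `M > 8` one may take `A` (resp. `B`)
to be the integers `0 ≤ x < Mⁿ` all of whose base-`M` digits lie in `{0,2,3,4}`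
(resp. `{0,1,2,3}`), and `G` the set of pairs `(a,b)` such that for every `i < n` the
pair of `i`-th base-`M` digits `(dᵢ(a), dᵢ(b))` lies in
`{(4,0), (2,1), (3,1), (4,1), (0,2), (2,2), (0,3), (2,3)}`
(the `i`-th base-`M` digit of `a` being `a / Mⁱ % M`, and `2b` meaning `b + b`). -/
theorem ruzsa_example_sum_and_double (n M : ℕ) (hn : 0 < n) (hM : 8 < M)
    (A B : Finset ℤ)
    (hA : A = (Finset.Ico (0 : ℤ) ((M : ℤ) ^ n)).filter
      (fun a => ∀ i < n, a / (M : ℤ) ^ i % (M : ℤ) ∈ ({0, 2, 3, 4} : Finset ℤ)))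
    (hB : B = (Finset.Ico (0 : ℤ) ((M : ℤ) ^ n)).filter
      (fun b => ∀ i < n, b / (M : ℤ) ^ i % (M : ℤ) ∈ ({0, 1, 2, 3} : Finset ℤ)))
    (G : Finset (ℤ × ℤ))
    (hG : G = (A ×ˢ B).filter
      (fun p => ∀ i < n, (p.1 / (M : ℤ) ^ i % (M : ℤ), p.2 / (M : ℤ) ^ i % (M : ℤ)) ∈
        ({(4, 0), (2, 1), (3, 1), (4, 1), (0, 2), (2, 2), (0, 3), (2, 3)} :
          Finset (ℤ × ℤ)))) :
    G ⊆ A ×ˢ B ∧ A.card ≤ 4 ^ n ∧ B.card ≤ 4 ^ n ∧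
      (G.image (fun p => p.1 + p.2)).card ≤ 4 ^ n ∧
      (G.image (fun p => p.1 + (p.2 + p.2))).card ≤ 4 ^ n ∧
      (G.image (fun p => p.1 - p.2)).card = 8 ^ n := by
  have hM8 : (8 : ℤ) < (M : ℤ) := by exact_mod_cast hM
  have hM0 : (0 : ℤ) < (M : ℤ) := by linarith
  have hAmem : ∀ a ∈ A, 0 ≤ a ∧ a < (M : ℤ) ^ n ∧
      ∀ i : Fin n, a / (M : ℤ) ^ (i : ℕ) % (M : ℤ) ∈ ({0, 2, 3, 4} : Finset ℤ) := by
    intro a ha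
    rw [hA, Finset.mem_filter, Finset.mem_Ico] at ha
    exact ⟨ha.1.1, ha.1.2, fun i => ha.2 i i.isLt⟩
  have hBmem : ∀ b ∈ B, 0 ≤ b ∧ b < (M : ℤ) ^ n ∧
      ∀ i : Fin n, b / (M : ℤ) ^ (i : ℕ) % (M : ℤ) ∈ ({0, 1, 2, 3} : Finset ℤ) := by
    intro b hb
    rw [hB, Finset.mem_filter, Finset.mem_Ico] at hb
    exact ⟨hb.1.1, hb.1.2, fun i => hb.2 i i.isLt⟩
  have hGmem : ∀ p ∈ G, p.1 ∈ A ∧ p.2 ∈ B ∧ ∀ i : Fin n,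
      (p.1 / (M : ℤ) ^ (i : ℕ) % (M : ℤ), p.2 / (M : ℤ) ^ (i : ℕ) % (M : ℤ)) ∈
        ({(4, 0), (2, 1), (3, 1), (4, 1), (0, 2), (2, 2), (0, 3), (2, 3)} :
          Finset (ℤ × ℤ)) := by
    intro p hp
    rw [hG, Finset.mem_filter, Finset.mem_product] at hp
    exact ⟨hp.1.1, hp.1.2, fun i => hp.2 i i.isLt⟩
  have hGsub : G ⊆ A ×ˢ B := by rw [hG]; exact Finset.filter_subset _ _
  refine ⟨hGsub, ?_, ?_, ?_, ?_, ?_⟩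
  · -- card A
    have h := rz_card_le_esum (M : ℤ) ({0, 2, 3, 4} : Finset ℤ) A (fun a ha => by
      obtain ⟨h0, h1, h2⟩ := hAmem a ha
      exact ⟨fun i => a / (M : ℤ) ^ (i : ℕ) % (M : ℤ), h2,
        (rz_esum_expand (M : ℤ) hM0 n a h0 h1).symm⟩)
    have hc : ({0, 2, 3, 4} : Finset ℤ).card = 4 := by decide
    rwa [hc] at h
  · -- card B
    have h := rz_card_le_esum (M : ℤ) ({0, 1, 2, 3} : Finset ℤ) B (fun b hb => by
      obtain ⟨h0, h1, h2⟩ := hBmem b hb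
      exact ⟨fun i => b / (M : ℤ) ^ (i : ℕ) % (M : ℤ), h2,
        (rz_esum_expand (M : ℤ) hM0 n b h0 h1).symm⟩)
    have hc : ({0, 1, 2, 3} : Finset ℤ).card = 4 := by decide
    rwa [hc] at h
  · -- a + b
    have h := rz_card_le_esum (M : ℤ) ({2, 3, 4, 5} : Finset ℤ)
      (G.image (fun p => p.1 + p.2)) (fun x hx => by
        obtain ⟨p, hp, rfl⟩ := Finset.mem_image.1 hx
        obtain ⟨ha, hb, hpair⟩ := hGmem p hp
        obtain ⟨ha0, ha1, _⟩ := hAmem _ ha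
        obtain ⟨hb0, hb1, _⟩ := hBmem _ hb
        refine ⟨fun i => p.1 / (M : ℤ) ^ (i : ℕ) % (M : ℤ)
            + p.2 / (M : ℤ) ^ (i : ℕ) % (M : ℤ), ?_, ?_⟩
        · intro i
          have hpi := hpair i
          simp only [Finset.mem_insert, Finset.mem_singleton, Prod.mk.injEq] at hpi
          rcases hpi with ⟨e1, e2⟩ | ⟨e1, e2⟩ | ⟨e1, e2⟩ | ⟨e1, e2⟩ | ⟨e1, e2⟩ | ⟨e1, e2⟩
            | ⟨e1, e2⟩ | ⟨e1, e2⟩ <;> simp only [e1, e2] <;> decide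
        · have e1 := rz_esum_expand (M : ℤ) hM0 n p.1 ha0 ha1
          have e2 := rz_esum_expand (M : ℤ) hM0 n p.2 hb0 hb1
          conv_lhs => rw [← e1, ← e2]
          rw [← Finset.sum_add_distrib]
          exact Finset.sum_congr rfl fun i _ => by ring)
    have hc : ({2, 3, 4, 5} : Finset ℤ).card = 4 := by decide
    rwa [hc] at h
  · -- a + 2b
    have h := rz_card_le_esum (M : ℤ) ({4, 5, 6, 8} : Finset ℤ)
      (G.image (fun p => p.1 + (p.2 + p.2))) (fun x hx => by
        obtain ⟨p, hp, rfl⟩ := Finset.mem_image.1 hx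
        obtain ⟨ha, hb, hpair⟩ := hGmem p hp
        obtain ⟨ha0, ha1, _⟩ := hAmem _ ha
        obtain ⟨hb0, hb1, _⟩ := hBmem _ hb
        refine ⟨fun i => p.1 / (M : ℤ) ^ (i : ℕ) % (M : ℤ)
            + (p.2 / (M : ℤ) ^ (i : ℕ) % (M : ℤ) + p.2 / (M : ℤ) ^ (i : ℕ) % (M : ℤ)),
            ?_, ?_⟩
        · intro i
          have hpi := hpair i
          simp only [Finset.mem_insert, Finset.mem_singleton, Prod.mk.injEq] at hpi
          rcases hpi with ⟨e1, e2⟩ | ⟨e1, e2⟩ | ⟨e1, e2⟩ | ⟨e1, e2⟩ | ⟨e1, e2⟩ | ⟨e1, e2⟩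
            | ⟨e1, e2⟩ | ⟨e1, e2⟩ <;> simp only [e1, e2] <;> decide
        · have e1 := rz_esum_expand (M : ℤ) hM0 n p.1 ha0 ha1
          have e2 := rz_esum_expand (M : ℤ) hM0 n p.2 hb0 hb1
          conv_lhs => rw [← e1, ← e2]
          rw [← Finset.sum_add_distrib, ← Finset.sum_add_distrib]
          exact Finset.sum_congr rfl fun i _ => by ring)
    have hc : ({4, 5, 6, 8} : Finset ℤ).card = 4 := by decide
    rwa [hc] at h
  · -- a - b
    have h := rz_card_eq_esum (M : ℤ) hM8 ({4, 1, 2, 3, -2, 0, -3, -1} : Finset ℤ)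
      (by decide) (G.image (fun p => p.1 - p.2))
      (fun x hx => by
        obtain ⟨p, hp, rfl⟩ := Finset.mem_image.1 hx
        obtain ⟨ha, hb, hpair⟩ := hGmem p hp
        obtain ⟨ha0, ha1, _⟩ := hAmem _ ha
        obtain ⟨hb0, hb1, _⟩ := hBmem _ hb
        refine ⟨fun i => p.1 / (M : ℤ) ^ (i : ℕ) % (M : ℤ)
            - p.2 / (M : ℤ) ^ (i : ℕ) % (M : ℤ), ?_, ?_⟩
        · intro i
          have hpi := hpair i
          simp only [Finset.mem_insert, Finset.mem_singleton, Prod.mk.injEq] at hpi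
          rcases hpi with ⟨e1, e2⟩ | ⟨e1, e2⟩ | ⟨e1, e2⟩ | ⟨e1, e2⟩ | ⟨e1, e2⟩ | ⟨e1, e2⟩
            | ⟨e1, e2⟩ | ⟨e1, e2⟩ <;> simp only [e1, e2] <;> decide
        · have e1 := rz_esum_expand (M : ℤ) hM0 n p.1 ha0 ha1
          have e2 := rz_esum_expand (M : ℤ) hM0 n p.2 hb0 hb1
          conv_lhs => rw [← e1, ← e2]
          rw [← Finset.sum_sub_distrib]
          exact Finset.sum_congr rfl fun i _ => by ring)
      (fun f hf => by
        have spec := fun i => rz_rr_spec (f i) (hf i)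
        have hfa : ∀ i : Fin n, (rz_rr (f i)).1 ∈ Finset.Ico 0 (M : ℤ) := fun i =>
          Finset.mem_Ico.2 ⟨(spec i).2.2.2.2.1, by linarith [(spec i).2.2.2.2.2.1]⟩
        have hfb : ∀ i : Fin n, (rz_rr (f i)).2 ∈ Finset.Ico 0 (M : ℤ) := fun i =>
          Finset.mem_Ico.2 ⟨(spec i).2.2.2.2.2.2.1, by linarith [(spec i).2.2.2.2.2.2.2]⟩
        set a := ∑ i : Fin n, (rz_rr (f i)).1 * (M : ℤ) ^ (i : ℕ) with ha_def
        set b := ∑ i : Fin n, (rz_rr (f i)).2 * (M : ℤ) ^ (i : ℕ) with hb_def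
        have haA : a ∈ A := by
          rw [hA, Finset.mem_filter, Finset.mem_Ico]
          obtain ⟨h0, h1⟩ := rz_esum_mem (M : ℤ) _ hfa
          refine ⟨⟨h0, h1⟩, fun i hi => ?_⟩
          have hd := rz_esum_digit (M : ℤ) _ hfa ⟨i, hi⟩
          rw [show ((⟨i, hi⟩ : Fin n) : ℕ) = i from rfl] at hd
          rw [← ha_def] at hd
          rw [hd]
          exact (spec ⟨i, hi⟩).1
        have hbB : b ∈ B := by
          rw [hB, Finset.mem_filter, Finset.mem_Ico]
          obtain ⟨h0, h1⟩ := rz_esum_mem (M : ℤ) _ hfb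
          refine ⟨⟨h0, h1⟩, fun i hi => ?_⟩
          have hd := rz_esum_digit (M : ℤ) _ hfb ⟨i, hi⟩
          rw [show ((⟨i, hi⟩ : Fin n) : ℕ) = i from rfl] at hd
          rw [← hb_def] at hd
          rw [hd]
          exact (spec ⟨i, hi⟩).2.1
        have habG : (a, b) ∈ G := by
          rw [hG, Finset.mem_filter, Finset.mem_product]
          refine ⟨⟨haA, hbB⟩, fun i hi => ?_⟩
          have d1 := rz_esum_digit (M : ℤ) _ hfa ⟨i, hi⟩
          have d2 := rz_esum_digit (M : ℤ) _ hfb ⟨i, hi⟩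
          rw [show ((⟨i, hi⟩ : Fin n) : ℕ) = i from rfl] at d1 d2
          rw [← ha_def] at d1
          rw [← hb_def] at d2
          show (a / (M : ℤ) ^ i % (M : ℤ), b / (M : ℤ) ^ i % (M : ℤ)) ∈ _
          rw [d1, d2]
          exact (spec ⟨i, hi⟩).2.2.1
        refine Finset.mem_image.2 ⟨(a, b), habG, ?_⟩
        show a - b = _
        rw [ha_def, hb_def, ← Finset.sum_sub_distrib]
        exact Finset.sum_congr rfl fun i _ => by
          rw [← sub_mul, (spec i).2.2.2.1])
    have hc : ({4, 1, 2, 3, -2, 0, -3, -1} : Finset ℤ).card = 8 := by decide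
    rwa [hc] at h
end
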